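/- arXiv:2404.11454 — 8 statements merged into one kernel-verified Lean document; each statement's English description precedes it below -/
import Mathlib

section
/- For every positive integer m there exists a positive integer n such that for every coloring of n-dimensional Euclidean space with an arbitrary set of colors, there exists an isometric copy of the vertex set {0,1}^m of the m-dimensional unit hypercube in ℝⁿ that is either monochromatic or rainbow. -/
/-- The vertex set `{0,1}^m` of the `m`-dimensional unit hypercube. -/
def unitCubeVertices (m : ℕ) : Set (EuclideanSpace ℝ (Fin m)) :=
  {x | ∀ i, x i = 0 ∨ x i = 1}

/-!
Send an increasing `M`-tuple `g` of coordinates of `ℝᴳ`, `M = 2m`, to the point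
`(√2)⁻¹ (e_{g 1} + ⋯ + e_{g M})`, and colour each increasing `2M`-tuple by which pairs of its
subtuples taking one entry from each consecutive pair receive equal colours. By Ramsey's theorem
there are `M` blocks of four coordinates, each lying after the previous one, on which this colour
is constant. For choices `u`, `u'` of one slot in `{0, 1, 2}` per block (the fourth slot is
spare), whether the corresponding points receive equal colours then depends only on the
coordinatewise comparisons between `u` and `u'`.

Raising one block from slot `0` to slot `1` either keeps or changes the colour, and `m` blocks
behave alike; the choices with `u i ∈ {0, 1}` on these blocks and `0` elsewhere form an isometric
unit cube. If raising keeps the colour, flipping one block at a time shows the cube is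
monochromatic. Otherwise it is rainbow: if `u i = 0`, `u' i = 1` and `u`, `u'` had equal colours,
then so would `u` and the choice `w` that raises block `i` of `u'` to slot `2`, since `w` compares
with `u` as `u'` does; but `u'` and `w` compare as raising block `i` from `0` to `1` does.
-/

open Finset Function

namespace Ramsey

variable {α κ : Type*}

def IsMonochromatic (c : Finset α → κ) (k : ℕ) (T : Finset α) : Prop :=
  ∃ col, ∀ A ⊆ T, #A = k → c A = col

def IsMinHomogeneous [LinearOrder α] (c : Finset α → κ) (k : ℕ) (E : Finset α) : Prop :=
  ∃ col : α → κ, ∀ a ∈ E, ∀ Y ⊆ E, (∀ y ∈ Y, a < y) → #Y = k → c (insert a Y) = col a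

def ramseyBound (r : ℕ) : ℕ → ℕ → ℕ
  | 0, t => t
  | k + 1, t => (fun n => ramseyBound r k n + 1)^[r * t] 0

theorem exists_isMinHomogeneous [LinearOrder α] {r k : ℕ}
    (hk : ∀ (c : Finset α → κ) (t : ℕ) (S : Finset α), ramseyBound r k t ≤ #S →
      ∃ T ⊆ S, #T = t ∧ IsMonochromatic c k T)
    (c : Finset α → κ) (L : ℕ) (S : Finset α)
    (hS : (fun n => ramseyBound r k n + 1)^[L] 0 ≤ #S) :
    ∃ E ⊆ S, #E = L ∧ IsMinHomogeneous c k E := by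
  classical
  induction L generalizing S with
  | zero => exact ⟨∅, empty_subset _, rfl, fun _ => c ∅, by simp⟩
  | succ L ih =>
    rw [Function.iterate_succ_apply'] at hS
    have hne : S.Nonempty := card_pos.1 (by omega)
    set a := S.min' hne
    have haS : a ∈ S := S.min'_mem hne
    obtain ⟨S', hS'S, hS', col₀, hcol₀⟩ := hk (fun Y => c (insert a Y))
      ((fun n => ramseyBound r k n + 1)^[L] 0) (S.erase a) (by rw [card_erase_of_mem haS]; omega)
    obtain ⟨E, hES', hE, col, hcol⟩ := ih S' hS'.ge
    have hES : E ⊆ S.erase a := hES'.trans hS'S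
    have haE : a ∉ E := fun h => by simpa using hES h
    refine ⟨insert a E, insert_subset haS (hES.trans (erase_subset _ _)), by
      rw [card_insert_of_notMem haE, hE], Function.update col a col₀, ?_⟩
    intro b hb Y hY hbY hYk
    have hlt : ∀ e ∈ E, a < e := fun e he =>
      lt_of_le_of_ne (S.min'_le e (mem_of_mem_erase (hES he))) (ne_of_mem_of_not_mem he haE).symm
    rcases mem_insert.1 hb with rfl | hbE
    · have hYE : Y ⊆ E := (subset_insert_iff_of_notMem fun h => (hbY _ h).false).1 hY
      rw [Function.update_self]
      exact hcol₀ Y (hYE.trans hES') hYk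
    · have hYE : Y ⊆ E := (subset_insert_iff_of_notMem fun h =>
        (hbY _ h).not_gt (hlt b hbE)).1 hY
      rw [Function.update_of_ne (hlt b hbE).ne']
      exact hcol b hbE Y hYE hbY hYk

theorem exists_isMonochromatic [LinearOrder α] [Fintype κ] (c : Finset α → κ) (k t : ℕ)
    (S : Finset α) (hS : ramseyBound (Fintype.card κ) k t ≤ #S) :
    ∃ T ⊆ S, #T = t ∧ IsMonochromatic c k T := by
  classical
  induction k generalizing c t S with
  | zero =>
    obtain ⟨T, hTS, hT⟩ := exists_subset_card_eq hS
    exact ⟨T, hTS, hT, c ∅, fun A _ hA => by rw [card_eq_zero.1 hA]⟩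
  | succ k ih =>
    have : Nonempty κ := ⟨c ∅⟩
    obtain ⟨E, hES, hE, col, hcol⟩ := exists_isMinHomogeneous ih c _ S hS
    obtain ⟨y, -, hy⟩ := exists_le_card_fiber_of_mul_le_card_of_maps_to
      (fun a _ => mem_univ (col a)) univ_nonempty (n := t) (by rw [card_univ, hE])
    obtain ⟨T, hTy, hT⟩ := exists_subset_card_eq hy
    have hTE : T ⊆ E := hTy.trans (filter_subset _ _)
    refine ⟨T, hTE.trans hES, hT, y, fun A hAT hA => ?_⟩
    have hne : A.Nonempty := card_pos.1 (by omega)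
    have haA : A.min' hne ∈ A := A.min'_mem hne
    have hcolA : c A = col (A.min' hne) := by
      have h := hcol _ (hTE (hAT haA)) _ ((erase_subset _ _).trans (hAT.trans hTE))
        (fun y hy => A.min'_lt_of_mem_erase_min' hne hy)
        (by rw [card_erase_of_mem haA, hA, Nat.add_sub_cancel])
      rwa [insert_erase haA] at h
    rw [hcolA]
    exact (mem_filter.1 (hTy (hAT haA))).2

theorem exists_orderEmbedding_forall_trans_eq (β γ κ : Type*) [LinearOrder β] [Fintype β]
    [LinearOrder γ] [Fintype γ] [Fintype κ] :
    ∃ G, ∀ c : (β ↪o Fin G) → κ, ∃ t : γ ↪o Fin G, ∀ f g : β ↪o γ,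
      c (f.trans t) = c (g.trans t) := by
  classical
  refine ⟨ramseyBound (Fintype.card (Option κ)) (Fintype.card β) (Fintype.card γ), fun c => ?_⟩
  let eβ := Fintype.orderIsoFinOfCardEq β rfl
  let c' : Finset (Fin _) → Option κ := fun A =>
    if h : #A = Fintype.card β then some (c (eβ.symm.toOrderEmbedding.trans (A.orderEmbOfFin h)))
    else none
  obtain ⟨T, -, hT, col, hcol⟩ :=
    exists_isMonochromatic c' (Fintype.card β) (Fintype.card γ) univ (by simp)
  let t : γ ↪o Fin _ :=
    (Fintype.orderIsoFinOfCardEq γ rfl).symm.toOrderEmbedding.trans (T.orderEmbOfFin hT)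
  have hcolor : ∀ f : β ↪o γ, c' (univ.map (f.trans t).toEmbedding) = some (c (f.trans t)) := by
    intro f
    have hcard : #(univ.map (f.trans t).toEmbedding) = Fintype.card β := by simp
    simp only [c', dif_pos hcard]
    rw [← orderEmbOfFin_unique' hcard (f := eβ.toOrderEmbedding.trans (f.trans t))
      (fun x => mem_map_of_mem _ (mem_univ _))]
    congr 2
    ext x
    simp
  have hsub : ∀ f : β ↪o γ, univ.map (f.trans t).toEmbedding ⊆ T := fun f y hy => by
    obtain ⟨x, -, rfl⟩ := mem_map.1 hy
    exact T.orderEmbOfFin_mem hT _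
  refine ⟨t, fun f g => Option.some_injective _ ?_⟩
  rw [← hcolor, ← hcolor, hcol _ (hsub f) (by simp), hcol _ (hsub g) (by simp)]

end Ramsey

def lexFiberMap {ι β γ : Type*} [LinearOrder ι] [LinearOrder β] [LinearOrder γ]
    (e : ι → β ↪o γ) : ι ×ₗ β ↪o ι ×ₗ γ :=
  OrderEmbedding.ofStrictMono (fun x => toLex ((ofLex x).1, e (ofLex x).1 (ofLex x).2)) <| by
    intro x y h
    rw [Prod.Lex.lt_iff] at h ⊢
    simp only [ofLex_toLex]
    rcases h with h | ⟨h₁, h₂⟩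
    · exact Or.inl h
    · rw [h₁]
      exact Or.inr ⟨rfl, (e _).strictMono h₂⟩

theorem lexFiberMap_toLex {ι β γ : Type*} [LinearOrder ι] [LinearOrder β] [LinearOrder γ]
    (e : ι → β ↪o γ) (i : ι) (b : β) : lexFiberMap e (toLex (i, b)) = toLex (i, e i b) := rfl

theorem exists_fin_two_orderEmbedding {δ : Type*} [Preorder δ] {p q : δ} (h : p < q) :
    ∃ e : Fin 2 ↪o δ, e 0 = p ∧ e 1 = q :=
  ⟨OrderEmbedding.ofStrictMono ![p, q] (Fin.strictMono_iff_lt_succ.2 fun i => by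
    fin_cases i; exact h), rfl, rfl⟩

def comparePattern : Ordering → Fin 2 × Fin 2
  | .lt => (0, 1)
  | .eq => (0, 0)
  | .gt => (1, 0)

/-- Equal entries are realised together with the extra slot `Fin.last K`. -/
theorem exists_orderEmbedding_comparePattern {K : ℕ} (x y : Fin K) :
    ∃ e : Fin 2 ↪o Fin (K + 1),
      e (comparePattern (compare x y)).1 = x.castSucc ∧
        e (comparePattern (compare x y)).2 = y.castSucc := by
  rcases lt_trichotomy x y with h | rfl | h
  · simpa [compare_lt_iff_lt.2 h, comparePattern] using
      exists_fin_two_orderEmbedding (Fin.castSucc_lt_castSucc_iff.2 h)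
  · obtain ⟨e, he, -⟩ := exists_fin_two_orderEmbedding (Fin.castSucc_lt_last x)
    exact ⟨e, by simpa [comparePattern] using he⟩
  · obtain ⟨e, he₀, he₁⟩ := exists_fin_two_orderEmbedding (Fin.castSucc_lt_castSucc_iff.2 h)
    exact ⟨e, by simpa [compare_gt_iff_gt.2 h, comparePattern] using ⟨he₁, he₀⟩⟩

def OrderInvariant {ι β α : Type*} [LinearOrder β] (C : (ι → β) → α) : Prop :=
  ∀ u u' w w' : ι → β, (∀ i, compare (u i) (u' i) = compare (w i) (w' i)) →
    (C u = C u' ↔ C w = C w')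

open Ramsey in
theorem exists_orderInvariant_slots (M K : ℕ) :
    ∃ G, ∀ {α : Type*} (c : (Fin M → Fin G) → α), ∃ slot : Fin M × Fin K ↪ Fin G,
      OrderInvariant fun u : Fin M → Fin K => c fun i => slot (i, u i) := by
  classical
  obtain ⟨G, hG⟩ := exists_orderEmbedding_forall_trans_eq (Fin M ×ₗ Fin 2) (Fin M ×ₗ Fin (K + 1))
    ((Fin M → Fin 2) → (Fin M → Fin 2) → Bool)
  refine ⟨G, fun {α} c => ?_⟩
  let Φ (h : Fin M ×ₗ Fin 2 ↪o Fin G) (a b : Fin M → Fin 2) : Bool :=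
    decide (c (fun i => h (toLex (i, a i))) = c (fun i => h (toLex (i, b i))))
  obtain ⟨t, ht⟩ := hG Φ
  let slot : Fin M × Fin K ↪ Fin G :=
    ⟨fun p => t (toLex (p.1, p.2.castSucc)), fun p q h => Prod.ext_iff.2 (by simpa using h)⟩
  -- Each pair `u, u'` sits inside one increasing `2M`-tuple at positions determined by the
  -- comparisons of `u` and `u'`, and by homogeneity `Φ` does not depend on that tuple.
  have key : ∀ u u' : Fin M → Fin K, ∃ ρ : Fin M ×ₗ Fin 2 ↪o Fin M ×ₗ Fin (K + 1),
      (c (fun i => slot (i, u i)) = c (fun i => slot (i, u' i)) ↔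
        Φ (ρ.trans t) (fun i => (comparePattern (compare (u i) (u' i))).1)
          (fun i => (comparePattern (compare (u i) (u' i))).2) = true) := by
    intro u u'
    choose e he using fun i => exists_orderEmbedding_comparePattern (u i) (u' i)
    refine ⟨lexFiberMap e, ?_⟩
    simp only [Φ, RelEmbedding.coe_trans, comp_apply, lexFiberMap_toLex, he, decide_eq_true_iff]
    rfl
  refine ⟨slot, fun u u' w w' h => ?_⟩
  obtain ⟨ρ, hρ⟩ := key u u'
  obtain ⟨ρ', hρ'⟩ := key w w'
  rw [hρ, hρ', ht ρ ρ']
  simp only [h]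

theorem exists_embedding_forall_or_forall_not {ι : Type*} [Fintype ι] (p : ι → Prop) {m : ℕ}
    (hm : m + m ≤ Fintype.card ι) : ∃ P : Fin m ↪ ι, (∀ j, p (P j)) ∨ ∀ j, ¬p (P j) := by
  classical
  have hsplit := card_filter_add_card_filter_not (s := univ) p
  rw [card_univ] at hsplit
  have hemb : ∀ B : Finset ι, m ≤ #B → ∃ P : Fin m ↪ ι, ∀ j, P j ∈ B := fun B hB =>
    ⟨(Function.Embedding.nonempty_of_card_le (by simpa using hB)).some.trans
      (Function.Embedding.subtype (· ∈ B)), fun j => by simp⟩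
  by_cases h : m ≤ #(univ.filter p)
  · obtain ⟨P, hP⟩ := hemb _ h
    exact ⟨P, Or.inl fun j => (mem_filter.1 (hP j)).2⟩
  · obtain ⟨P, hP⟩ := hemb (univ.filter fun i => ¬p i) (by omega)
    exact ⟨P, Or.inr fun j => (mem_filter.1 (hP j)).2⟩

section Cube

variable {ι α : Type*} [DecidableEq ι] {C : (ι → Fin 3) → α}

def FlipInvariantAt (C : (ι → Fin 3) → α) (i : ι) : Prop :=
  C 0 = C (Pi.single i 1)

def cubeVertex (s : Finset ι) : ι → Fin 3 :=
  fun i => if i ∈ s then 1 else 0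

namespace OrderInvariant

theorem eq_update_iff (hC : OrderInvariant C) (u : ι → Fin 3) (i : ι) {x y : Fin 3}
    (hxy : x < y) : C (update u i x) = C (update u i y) ↔ FlipInvariantAt C i := by
  refine hC _ _ _ _ fun j => ?_
  rcases eq_or_ne j i with rfl | hj
  · simp only [update_self, Pi.zero_apply, Pi.single_eq_same, compare_lt_iff_lt.2 hxy]
    decide
  · simp [hj]

theorem eq_zero_of_forall_flipInvariantAt (hC : OrderInvariant C) {s : Finset ι}
    (hs : ∀ i ∈ s, FlipInvariantAt C i) : C (cubeVertex s) = C 0 := by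
  induction s using Finset.induction_on with
  | empty => rfl
  | insert a s ha ih =>
    have h₀ : update (cubeVertex s) a 0 = cubeVertex s := by
      funext i
      by_cases hi : i = a <;> simp [cubeVertex, hi, ha]
    have h₁ : update (cubeVertex s) a 1 = cubeVertex (insert a s) := by
      funext i
      by_cases hi : i = a <;> simp [cubeVertex, hi]
    rw [← h₁, ← (hC.eq_update_iff _ a (by decide : (0 : Fin 3) < 1)).2
      (hs a (mem_insert_self _ _)), h₀, ih fun i hi => hs i (mem_insert_of_mem hi)]

theorem ne_of_not_flipInvariantAt (hC : OrderInvariant C) {i : ι} (hi : ¬FlipInvariantAt C i)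
    {u u' : ι → Fin 3} (hu : u i = 0) (hu' : u' i = 1) : C u ≠ C u' := by
  intro h
  -- Moving block `i` of `u'` up to slot `2` keeps its comparison with `u` unchanged.
  have h₂ : C u = C (update u' i 2) := (hC u u' u (update u' i 2) fun j => by
    rcases eq_or_ne j i with rfl | hj
    · simp only [update_self, hu, hu']
      decide
    · simp [hj]).1 h
  refine hi ((hC.eq_update_iff u' i (by decide : (1 : Fin 3) < 2)).1 ?_)
  rw [← hu', update_eq_self, ← h, h₂]

theorem eq_of_forall_not_flipInvariantAt (hC : OrderInvariant C) {s t : Finset ι}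
    (hst : ∀ i ∈ s ∪ t, ¬FlipInvariantAt C i) (h : C (cubeVertex s) = C (cubeVertex t)) :
    s = t := by
  by_contra hne
  obtain ⟨i, hi⟩ : ∃ i, ¬(i ∈ s ↔ i ∈ t) := by simpa [Finset.ext_iff] using hne
  by_cases his : i ∈ s
  · have hit : i ∉ t := fun h => hi (iff_of_true his h)
    exact hC.ne_of_not_flipInvariantAt (hst i (mem_union_left _ his)) (by simp [cubeVertex, hit])
      (by simp [cubeVertex, his]) h.symm
  · have hit : i ∈ t := by tauto
    exact hC.ne_of_not_flipInvariantAt (hst i (mem_union_right _ hit)) (by simp [cubeVertex, his])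
      (by simp [cubeVertex, hit]) h

theorem exists_embedding_mono_or_rainbow [Fintype ι] (hC : OrderInvariant C) {m : ℕ}
    (hm : m + m ≤ Fintype.card ι) : ∃ P : Fin m ↪ ι,
      (∀ s t : Finset (Fin m), C (cubeVertex (s.map P)) = C (cubeVertex (t.map P))) ∨
        ∀ s t : Finset (Fin m), C (cubeVertex (s.map P)) = C (cubeVertex (t.map P)) → s = t := by
  obtain ⟨P, hP | hP⟩ := exists_embedding_forall_or_forall_not (FlipInvariantAt C) hm
  · refine ⟨P, Or.inl fun s t => ?_⟩
    have hmono : ∀ s : Finset (Fin m), C (cubeVertex (s.map P)) = C 0 := fun s =>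
      hC.eq_zero_of_forall_flipInvariantAt fun i hi => by
        obtain ⟨j, -, rfl⟩ := mem_map.1 hi
        exact hP j
    rw [hmono, hmono]
  · refine ⟨P, Or.inr fun s t h => map_injective P (hC.eq_of_forall_not_flipInvariantAt ?_ h)⟩
    intro i hi
    obtain ⟨j, -, rfl⟩ := mem_map.1 (map_union (f := P) s t ▸ hi)
    exact hP j

end OrderInvariant

end Cube

theorem Orthonormal.dist_sum_smul {κ E : Type*} [Fintype κ] [NormedAddCommGroup E]
    [InnerProductSpace ℝ E] {v : κ → E} (hv : Orthonormal ℝ v) (x y : EuclideanSpace ℝ κ) :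
    dist (∑ i, x i • v i) (∑ i, y i • v i) = dist x y := by
  rw [dist_eq_norm, dist_eq_norm, ← sum_sub_distrib]
  simp_rw [← sub_smul]
  refine (sq_eq_sq₀ (norm_nonneg _) (norm_nonneg _)).1 ?_
  rw [← real_inner_self_eq_norm_sq, hv.inner_sum, EuclideanSpace.real_norm_sq_eq]
  simp [sq]

theorem orthonormal_smul_single_sub_single {κ n : Type*} [Fintype n] [DecidableEq n] {a b : κ → n}
    (ha : Injective a) (hb : Injective b) (hab : ∀ i j, a i ≠ b j) :
    Orthonormal ℝ fun i =>
      (√2)⁻¹ • (EuclideanSpace.single (a i) (1 : ℝ) - EuclideanSpace.single (b i) 1) := by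
  classical
  rw [orthonormal_iff_ite]
  intro i j
  simp only [real_inner_smul_left, real_inner_smul_right, inner_sub_left, inner_sub_right,
    EuclideanSpace.inner_single_left, PiLp.single_apply, ha.eq_iff, hb.eq_iff, hab,
    Ne.symm (hab _ _)]
  rcases eq_or_ne i j with rfl | h
  · simp only [Real.ringHom_apply, ↓reduceIte, mul_one, mul_zero, sub_zero, zero_sub, mul_neg,
      sub_neg_eq_add]
    field_simp
    norm_num
  · simp [h]

section Geometry

variable {ι n : Type*} [Fintype ι] [DecidableEq n]

-- The factor `(√2)⁻¹` puts slot choices that differ in `d` blocks at distance `√d`.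
noncomputable def scaledSumSingle (g : ι → n) : EuclideanSpace ℝ n :=
  (√2)⁻¹ • ∑ i, EuclideanSpace.single (g i) 1

noncomputable def flipVector (slot : ι × Fin 3 → n) (i : ι) : EuclideanSpace ℝ n :=
  (√2)⁻¹ • (EuclideanSpace.single (slot (i, 1)) (1 : ℝ) - EuclideanSpace.single (slot (i, 0)) 1)

theorem scaledSumSingle_cubeVertex [DecidableEq ι] (slot : ι × Fin 3 → n) (s : Finset ι) :
    scaledSumSingle (fun i => slot (i, cubeVertex s i)) =
      scaledSumSingle (fun i => slot (i, 0)) + ∑ i ∈ s, flipVector slot i := by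
  simp only [scaledSumSingle, flipVector, ← smul_sum, ← smul_add]
  congr 1
  rw [← univ_inter s, ← sum_ite_mem, ← sum_add_distrib]
  refine sum_congr rfl fun i _ => ?_
  by_cases hi : i ∈ s <;> simp [cubeVertex, hi]

noncomputable def cubeMap {m : ℕ} (slot : ι × Fin 3 → n) (P : Fin m → ι) :
    EuclideanSpace ℝ (Fin m) → EuclideanSpace ℝ n :=
  fun x => scaledSumSingle (fun i => slot (i, 0)) + ∑ j, x j • flipVector slot (P j)

theorem dist_cubeMap [Fintype n] {m : ℕ} {slot : ι × Fin 3 → n} (hslot : Injective slot)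
    {P : Fin m → ι} (hP : Injective P) (x y : EuclideanSpace ℝ (Fin m)) :
    dist (cubeMap slot P x) (cubeMap slot P y) = dist x y := by
  rw [cubeMap, cubeMap, dist_add_left]
  refine Orthonormal.dist_sum_smul ?_ x y
  refine orthonormal_smul_single_sub_single (a := fun j => slot (P j, 1))
    (b := fun j => slot (P j, 0)) (fun j k h => hP (Prod.ext_iff.1 (hslot h)).1)
    (fun j k h => hP (Prod.ext_iff.1 (hslot h)).1)
    (fun j k h => by simpa using (Prod.ext_iff.1 (hslot h)).2)

theorem cubeMap_of_mem_unitCubeVertices [DecidableEq ι] {m : ℕ} (slot : ι × Fin 3 → n)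
    (P : Fin m ↪ ι) {x : EuclideanSpace ℝ (Fin m)} (hx : x ∈ unitCubeVertices m) :
    cubeMap slot P x =
      scaledSumSingle (fun i => slot (i, cubeVertex ((univ.filter (x · = 1)).map P) i)) := by
  rw [scaledSumSingle_cubeVertex, sum_map, sum_filter, cubeMap]
  congr 1
  refine sum_congr rfl fun j _ => ?_
  rcases hx j with h | h <;> simp [h]

theorem injOn_filter_eq_one_unitCubeVertices (m : ℕ) :
    Set.InjOn (fun x : EuclideanSpace ℝ (Fin m) => univ.filter (x · = 1)) (unitCubeVertices m) := by
  intro x hx y hy h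
  ext j
  have := Finset.ext_iff.1 h j
  simp only [mem_filter, mem_univ, true_and] at this
  rcases hx j with h₁ | h₁ <;> rcases hy j with h₂ | h₂ <;> simp_all

end Geometry

/-- For every positive integer `m` there exists `n` such that every coloring of `ℝⁿ`
with an arbitrary set of colors contains an isometric copy of the vertex set `{0,1}^m`
of the unit hypercube that is either monochromatic or rainbow. -/
theorem cube_mono_or_rainbow (m : ℕ) (hm : 0 < m) :
    ∃ n : ℕ, 0 < n ∧
      ∀ (α : Type*) (χ : EuclideanSpace ℝ (Fin n) → α),
        ∃ f : EuclideanSpace ℝ (Fin m) → EuclideanSpace ℝ (Fin n),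
          Set.InjOn f (unitCubeVertices m) ∧
          (∀ x ∈ unitCubeVertices m, ∀ y ∈ unitCubeVertices m,
            dist (f x) (f y) = dist x y) ∧
          ((∀ x ∈ unitCubeVertices m, ∀ y ∈ unitCubeVertices m, χ (f x) = χ (f y)) ∨
            (∀ x ∈ unitCubeVertices m, ∀ y ∈ unitCubeVertices m,
              χ (f x) = χ (f y) → x = y)) := by
  obtain ⟨G, hG⟩ := exists_orderInvariant_slots (m + m) 3
  have hGpos : 0 < G := by
    obtain ⟨slot, -⟩ := hG (α := PUnit) fun _ => PUnit.unit
    exact Fin.pos_iff_nonempty.2 ⟨slot (⟨0, by omega⟩, 0)⟩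
  refine ⟨G, hGpos, fun α χ => ?_⟩
  obtain ⟨slot, hC⟩ := hG fun g => χ (scaledSumSingle g)
  obtain ⟨P, hP⟩ := hC.exists_embedding_mono_or_rainbow (m := m) (by simp)
  have hχ : ∀ x ∈ unitCubeVertices m, χ (cubeMap slot P x) =
      χ (scaledSumSingle fun i => slot (i, cubeVertex ((univ.filter (x · = 1)).map P) i)) :=
    fun x hx => by rw [cubeMap_of_mem_unitCubeVertices slot P hx]
  refine ⟨cubeMap slot P, fun x _ y _ h => dist_eq_zero.1 ?_,
    fun x _ y _ => dist_cubeMap slot.injective P.injective x y, ?_⟩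
  · rw [← dist_cubeMap slot.injective P.injective, h, dist_self]
  rcases hP with hmono | hrainbow
  · exact Or.inl fun x hx y hy => by rw [hχ x hx, hχ y hy]; exact hmono _ _
  · exact Or.inr fun x hx y hy h =>
      injOn_filter_eq_one_unitCubeVertices m hx hy (hrainbow _ _ (by rwa [← hχ x hx, ← hχ y hy]))
end

section
/- Let a, b, c be the sidelengths of an acute triangle T, and let χ be a coloring of ℝ³ such that no congruent copy of T is monochromatic or rainbow; that is, there are no points x, y, z ∈ ℝ³ with dist(y,z) = a, dist(x,z) = b, dist(x,y) = c for which either χ(x) = χ(y) = χ(z) or χ(x), χ(y), χ(z) are pairwise distinct. Suppose X, Y, U, V ∈ ℝ³ satisfy dist(X,Y) = dist(U,V) = c, dist(X,U) = dist(Y,V) = b, dist(X,V) = dist(Y,U) = a, and χ(X) ≠ χ(Y). Then χ(U) ≠ χ(V) and {χ(U), χ(V)} = {χ(X), χ(Y)} as sets. -/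
/-- If `χ` is a coloring of `ℝ³` with no monochromatic and no rainbow congruent copy of
an acute triangle with sidelengths `a, b, c`, and `(U,V)` is an extension of a pair
`(X,Y)` with `χ X ≠ χ Y` (a good pair), then `(U,V)` is again a good pair: `χ U ≠ χ V`
and `{χ U, χ V} = {χ X, χ Y}`. -/
theorem extension_of_good_pair_is_good
    (a b c : ℝ) (ha : 0 < a) (hb : 0 < b) (hc : 0 < c)
    (hacute₁ : a ^ 2 < b ^ 2 + c ^ 2)
    (hacute₂ : b ^ 2 < a ^ 2 + c ^ 2)
    (hacute₃ : c ^ 2 < a ^ 2 + b ^ 2)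
    {α : Type*} (χ : EuclideanSpace ℝ (Fin 3) → α)
    (hno : ∀ x y z : EuclideanSpace ℝ (Fin 3),
      dist y z = a → dist x z = b → dist x y = c →
        ¬(χ x = χ y ∧ χ y = χ z) ∧
        ¬(χ x ≠ χ y ∧ χ x ≠ χ z ∧ χ y ≠ χ z))
    (X Y U V : EuclideanSpace ℝ (Fin 3))
    (hXY : dist X Y = c) (hUV : dist U V = c)
    (hXU : dist X U = b) (hYV : dist Y V = b)
    (hXV : dist X V = a) (hYU : dist Y U = a)
    (hgood : χ X ≠ χ Y) :
    χ U ≠ χ V ∧ ({χ U, χ V} : Set α) = {χ X, χ Y} := by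
  have h1 := hno X Y U hYU hXU hXY
  have h2 := hno Y X V hXV hYV (by rw [dist_comm]; exact hXY)
  have h3 := hno U V X (by rw [dist_comm]; exact hXV) (by rw [dist_comm]; exact hXU) hUV
  have h4 := hno V U Y (by rw [dist_comm]; exact hYU) (by rw [dist_comm]; exact hYV)
    (by rw [dist_comm]; exact hUV)
  have hU : χ X = χ U ∨ χ Y = χ U := by
    by_contra h
    push_neg at h
    exact h1.2 ⟨hgood, h.1, h.2⟩
  have hV : χ Y = χ V ∨ χ X = χ V := by
    by_contra h
    push_neg at h
    exact h2.2 ⟨fun e => hgood e.symm, h.1, h.2⟩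
  rcases hU with hU | hU <;> rcases hV with hV | hV
  · constructor
    · rw [← hU, ← hV]; exact hgood
    · rw [← hU, ← hV, Set.pair_comm (χ X)]
  · exact absurd ⟨hU.symm.trans hV, hV.symm⟩ h3.1
  · exact absurd ⟨hV.symm.trans hU, hU.symm⟩ h4.1
  · constructor
    · rw [← hU, ← hV]; exact fun e => hgood e.symm
    · rw [← hU, ← hV]; exact Set.pair_comm _ _
end

section
/- Let a, b, c be the sidelengths of an acute triangle. Then for any two points A, B ∈ ℝ³ with dist(A,B) = c, there exist points C, D ∈ ℝ³ with dist(C,D) = c, dist(A,C) = dist(B,D) = b, and dist(A,D) = dist(B,C) = a; that is, ABCD is a simplex all four of whose triangular faces are congruent to the triangle with sidelengths a, b, c (every such pair (A,B) has an extension). -/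
/-!
Take an orthonormal pair `e, f` orthogonal to `B - A` and use the frame
`A + p (B - A) + q e + r f`. Put `C` at coordinates `(t, y, z)` and `D` at `(1 - t, y, -z)`,
the image of `C` under the half-turn about the line through the midpoint of `AB` in direction
`e`; this half-turn swaps `A` and `B`, so the five distance conditions reduce to three equations
in `t, y, z`. These are solved by `t = (b² + c² - a²) / (2c²)`, `y² = (a² + b² - c²) / 2` and
`4c²z² = (a² + c² - b²)(b² + c² - a²)`, which are real exactly because the triangle is acute
(or right).
-/

open Module RealInnerProductSpace

theorem exists_orthonormal_orthogonal {𝕜 E : Type*} [RCLike 𝕜] [NormedAddCommGroup E]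
    [InnerProductSpace 𝕜 E] [FiniteDimensional 𝕜 E] {k : ℕ} (hk : k + 1 ≤ finrank 𝕜 E) (v : E) :
    ∃ w : Fin k → E, Orthonormal 𝕜 w ∧ ∀ i, inner 𝕜 v (w i) = 0 := by
  have hK : k ≤ finrank 𝕜 (𝕜 ∙ v)ᗮ := by
    have := (𝕜 ∙ v).finrank_add_finrank_orthogonal
    have := finrank_span_le_card (R := 𝕜) ({v} : Set E)
    simp only [Set.toFinset_singleton, Finset.card_singleton] at this
    omega
  let b := stdOrthonormalBasis 𝕜 (𝕜 ∙ v)ᗮ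
  refine ⟨fun i ↦ b (Fin.castLE hK i), ?_, fun i ↦ ?_⟩
  · exact (b.orthonormal.comp _ (Fin.castLE_injective hK)).comp_linearIsometry (𝕜 ∙ v)ᗮ.subtypeₗᵢ
  · exact Submodule.mem_orthogonal_singleton_iff_inner_right.1 (b _).2

theorem norm_smul_add_smul_add_smul_sq {E : Type*} [NormedAddCommGroup E] [InnerProductSpace ℝ E]
    {d : E} {w : Fin 2 → E} (hw : Orthonormal ℝ w) (hdw : ∀ i, ⟪d, w i⟫ = 0) (p q r : ℝ) :
    ‖p • d + q • w 0 + r • w 1‖ ^ 2 = p ^ 2 * ‖d‖ ^ 2 + q ^ 2 + r ^ 2 := by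
  have h01 : ⟪w 0, w 1⟫ = 0 := hw.2 (by decide)
  rw [norm_add_sq_real, norm_add_sq_real]
  simp only [inner_add_left, inner_smul_left, inner_smul_right, norm_smul, hdw, h01, hw.1,
    Real.norm_eq_abs, mul_pow, sq_abs]
  simp

theorem exists_disphenoid_coords {a b c : ℝ} (hc : 0 < c) (h₁ : a ^ 2 ≤ b ^ 2 + c ^ 2)
    (h₂ : b ^ 2 ≤ a ^ 2 + c ^ 2) (h₃ : c ^ 2 ≤ a ^ 2 + b ^ 2) :
    ∃ t y z : ℝ, t ^ 2 * c ^ 2 + y ^ 2 + z ^ 2 = b ^ 2 ∧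
      (1 - t) ^ 2 * c ^ 2 + y ^ 2 + z ^ 2 = a ^ 2 ∧ (2 * t - 1) ^ 2 * c ^ 2 + (2 * z) ^ 2 = c ^ 2 := by
  obtain ⟨y, hy⟩ : ∃ y : ℝ, y ^ 2 = (a ^ 2 + b ^ 2 - c ^ 2) / 2 :=
    ⟨_, Real.sq_sqrt (by linarith)⟩
  obtain ⟨z, hz⟩ : ∃ z : ℝ, z ^ 2 = (a ^ 2 + c ^ 2 - b ^ 2) * (b ^ 2 + c ^ 2 - a ^ 2) :=
    ⟨_, Real.sq_sqrt (mul_nonneg (by linarith) (by linarith))⟩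
  refine ⟨(b ^ 2 + c ^ 2 - a ^ 2) / (2 * c ^ 2), y, z / (2 * c), ?_, ?_, ?_⟩
  · field_simp
    linear_combination 4 * c ^ 2 * hy + hz
  · field_simp
    linear_combination 4 * c ^ 2 * hy + hz
  · field_simp
    linear_combination hz

/-- Every pair of points at distance `c` in `ℝ³` has an extension: given an acute
triangle with sidelengths `a, b, c` and points `A, B` with `dist A B = c`, there exist
`C, D` such that `ABCD` is a simplex all four of whose faces are congruent to the
triangle. -/
theorem good_pair_has_extension
    (a b c : ℝ) (ha : 0 < a) (hb : 0 < b) (hc : 0 < c)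
    (hacute₁ : a ^ 2 < b ^ 2 + c ^ 2)
    (hacute₂ : b ^ 2 < a ^ 2 + c ^ 2)
    (hacute₃ : c ^ 2 < a ^ 2 + b ^ 2)
    (A B : EuclideanSpace ℝ (Fin 3)) (hAB : dist A B = c) :
    ∃ C D : EuclideanSpace ℝ (Fin 3),
      dist C D = c ∧ dist A C = b ∧ dist B D = b ∧ dist A D = a ∧ dist B C = a := by
  obtain ⟨t, y, z, hCA, hCB, hCD⟩ :=
    exists_disphenoid_coords hc hacute₁.le hacute₂.le hacute₃.le
  obtain ⟨w, hw, hBAw⟩ :=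
    exists_orthonormal_orthogonal (by simp : 2 + 1 ≤ finrank ℝ (EuclideanSpace ℝ (Fin 3))) (B - A)
  set pt : ℝ → ℝ → ℝ → EuclideanSpace ℝ (Fin 3) := fun p q r ↦ A + p • (B - A) + q • w 0 + r • w 1
  have hdist (p q r p' q' r' : ℝ) :
      dist (pt p q r) (pt p' q' r') ^ 2 = (p - p') ^ 2 * c ^ 2 + (q - q') ^ 2 + (r - r') ^ 2 := by
    rw [dist_eq_norm, ← hAB, dist_comm, dist_eq_norm, ← norm_smul_add_smul_add_smul_sq hw hBAw]
    congr 2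
    simp only [pt, sub_smul]
    abel
  have hA : A = pt 0 0 0 := by simp [pt]
  have hB : B = pt 1 0 0 := by simp [pt]
  rw [hA, hB]
  refine ⟨pt t y z, pt (1 - t) y (-z), ?_, ?_, ?_, ?_, ?_⟩ <;>
    rw [← sq_eq_sq₀ dist_nonneg (by positivity), hdist]
  · linear_combination hCD
  · linear_combination hCA
  · linear_combination hCA
  · linear_combination hCB
  · linear_combination hCB
end

section
/- Let l₁ and l₂ be two distinct lines in ℝ³ passing through a common point P. Then the subgroup of the isometry group of ℝ³ generated by all rotations about l₁ together with all rotations about l₂ equals the group of all orientation-preserving isometries of ℝ³ fixing P; that is, every orientation-preserving isometry of ℝ³ that fixes P is a finite composition of rotations about l₁ and rotations about l₂. -/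
/-- A line in `ℝ³`: a one-dimensional (nonempty) affine subspace. -/
def IsLine (l : AffineSubspace ℝ (EuclideanSpace ℝ (Fin 3))) : Prop :=
  (l : Set (EuclideanSpace ℝ (Fin 3))).Nonempty ∧
    Module.finrank ℝ l.direction = 1

/-- An isometry of `ℝ³` is orientation-preserving if the determinant of its linear
part is `1`. -/
def IsOrientationPreserving
    (f : EuclideanSpace ℝ (Fin 3) ≃ᵃⁱ[ℝ] EuclideanSpace ℝ (Fin 3)) : Prop :=
  LinearMap.det (f.linearIsometryEquiv.toLinearEquiv :
      EuclideanSpace ℝ (Fin 3) →ₗ[ℝ] EuclideanSpace ℝ (Fin 3)) = 1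

/-- A rotation about a line `l`: an orientation-preserving isometry of `ℝ³`
fixing every point of `l`. -/
def IsRotationAbout (l : AffineSubspace ℝ (EuclideanSpace ℝ (Fin 3)))
    (f : EuclideanSpace ℝ (Fin 3) ≃ᵃⁱ[ℝ] EuclideanSpace ℝ (Fin 3)) : Prop :=
  IsOrientationPreserving f ∧ ∀ p ∈ l, f p = p

/-!
Conjugating by the translation to `P` identifies the affine isometries fixing `P` with the
linear isometries, and the rotations about `l₁`, `l₂` with the special orthogonal maps fixing
unit directions `u`, `v` of the lines. Let `K` be the group these generate. If `a = A u` with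
`A ∈ K`, then `K` contains every rotation about `a` (a conjugate of a rotation about `u`), so the
orbit `K u` is closed under rotations about its own points. Rotating `u` about `v` and then about
`u` fills the cap `{y | 2 ⟪u, v⟫² - 1 ≤ ⟪u, y⟫}`, and rotating `u` about the points of a cap
`{y | k ≤ ⟪u, y⟫}` fills the cap `{y | 2 k - 1 ≤ ⟪u, y⟫}`; finitely many such steps reach the
whole unit sphere. Then any `A ∈ SO` agrees on `u` with some `B ∈ K`, and `B⁻¹ A` is a rotation
about `u`, so `A ∈ K`.
-/

open Module Submodule RealInnerProductSpace

noncomputable section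

variable {E : Type*} [NormedAddCommGroup E] [InnerProductSpace ℝ E]

theorem exists_norm_eq_one_forall_inner_eq_zero [FiniteDimensional ℝ E] {m : ℕ}
    (hm : m < finrank ℝ E) (w : Fin m → E) : ∃ n : E, ‖n‖ = 1 ∧ ∀ i, ⟪w i, n⟫ = 0 := by
  set K := span ℝ (Set.range w)
  have hK : finrank ℝ K < finrank ℝ E :=
    (finrank_range_le_card (R := ℝ) w).trans_lt (by simpa using hm)
  obtain ⟨z, hz, hz0⟩ := exists_mem_ne_zero_of_ne_bot <|
    mt K.orthogonal_eq_bot_iff.1 fun h ↦ by rw [h, finrank_top] at hK; omega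
  refine ⟨‖z‖⁻¹ • z, norm_smul_inv_norm hz0, fun i ↦ ?_⟩
  rw [real_inner_smul_right, hz _ (subset_span ⟨i, rfl⟩), mul_zero]

theorem Submodule.exists_norm_eq_one_eq_span_singleton [FiniteDimensional ℝ E]
    {K : Submodule ℝ E} (hK : finrank ℝ K = 1) : ∃ u : E, ‖u‖ = 1 ∧ K = ℝ ∙ u := by
  obtain ⟨z, hz, hz0⟩ := exists_mem_ne_zero_of_ne_bot (one_le_finrank_iff.1 hK.ge)
  refine ⟨‖z‖⁻¹ • z, norm_smul_inv_norm hz0, (eq_of_le_of_finrank_eq ?_ ?_).symm⟩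
  · exact (span_singleton_le_iff_mem _ _).2 (K.smul_mem _ hz)
  · rw [hK, finrank_span_singleton]
    exact smul_ne_zero (by simpa using hz0) hz0

theorem abs_real_inner_lt_one_of_span_singleton_ne {u v : E} (hu : ‖u‖ = 1) (hv : ‖v‖ = 1)
    (huv : ℝ ∙ u ≠ ℝ ∙ v) : |⟪u, v⟫| < 1 := by
  refine (abs_real_inner_le_norm u v).trans_eq (by rw [hu, hv, one_mul]) |>.lt_of_ne fun h ↦ ?_
  obtain ⟨-, r, hr, rfl⟩ :=
    (abs_real_inner_div_norm_mul_norm_eq_one_iff u v).1 (by rw [hu, hv, one_mul, div_one, h])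
  exact huv (span_singleton_smul_eq (Ne.isUnit hr) u).symm

theorem exists_unit_bisector [FiniteDimensional ℝ E] (h2 : 2 ≤ finrank ℝ E) {u y : E}
    (hu : ‖u‖ = 1) (hy : ‖y‖ = 1) :
    ∃ a : E, ‖a‖ = 1 ∧ ⟪a, u⟫ = ⟪a, y⟫ ∧ (1 + ⟪u, y⟫) / 2 ≤ ⟪u, a⟫ := by
  rcases eq_or_ne (u + y) 0 with huy | huy
  · obtain ⟨a, ha, hua⟩ := exists_norm_eq_one_forall_inner_eq_zero (m := 1) h2 ![u]
    have hau : ⟪a, u⟫ = 0 := by rw [real_inner_comm]; exact hua 0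
    have hya : y = -u := eq_neg_of_add_eq_zero_right huy
    refine ⟨a, ha, ?_, ?_⟩
    · rw [hya, inner_neg_right, hau, neg_zero]
    · rw [hya, inner_neg_right, real_inner_self_eq_norm_sq, hu, real_inner_comm, hau]
      norm_num
  refine ⟨‖u + y‖⁻¹ • (u + y), norm_smul_inv_norm huy, ?_, ?_⟩
  · simp only [real_inner_smul_left, inner_add_left, real_inner_comm u y]
    rw [real_inner_self_eq_norm_sq, real_inner_self_eq_norm_sq, hu, hy]
    ring
  · have hnorm : ‖u + y‖ ≤ 2 := (norm_add_le u y).trans (by rw [hu, hy]; norm_num)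
    have hd : 0 ≤ 1 + ⟪u, y⟫ := by
      have := neg_le_of_abs_le (abs_real_inner_le_norm u y)
      rw [hu, hy, one_mul] at this
      linarith
    rw [real_inner_smul_right, inner_add_right, real_inner_self_eq_norm_sq, hu, one_pow,
      inv_mul_eq_div]
    exact div_le_div_of_nonneg_left hd (norm_pos_iff.2 huy) hnorm

theorem exists_norm_eq_one_inner_eq_of_mem_Icc [FiniteDimensional ℝ E] (h3 : 3 ≤ finrank ℝ E)
    {u v : E} (hu : ‖u‖ = 1) (hv : ‖v‖ = 1) (huv : |⟪u, v⟫| < 1) {d : ℝ}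
    (hd : d ∈ Set.Icc (2 * ⟪u, v⟫ ^ 2 - 1) 1) :
    ∃ z : E, ‖z‖ = 1 ∧ ⟪v, z⟫ = ⟪v, u⟫ ∧ ⟪u, z⟫ = d := by
  set c := ⟪u, v⟫ with hc
  set s := 1 - c ^ 2
  have hs : 0 < s := by
    have := (sq_lt_one_iff_abs_lt_one c).2 huv
    linarith
  -- `z = c v + t p + μ n` with `p ⊥ v` and `n ⊥ u, v`: a point of the circle swept by `u`
  -- under rotations about `v`, at the position where `⟪u, z⟫ = c² + t s = d`.
  set p := u - c • v
  set t := (d - c ^ 2) / s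
  have ht : t ^ 2 ≤ 1 := by
    rw [sq_le_one_iff_abs_le_one, abs_le, le_div_iff₀ hs, div_le_iff₀ hs]
    constructor <;> linarith [hd.1, hd.2]
  obtain ⟨n, hn, hperp⟩ := exists_norm_eq_one_forall_inner_eq_zero (m := 2) h3 ![u, v]
  have hun : ⟪u, n⟫ = 0 := hperp 0
  have hvn : ⟪v, n⟫ = 0 := hperp 1
  have huu : ⟪u, u⟫ = 1 := by rw [real_inner_self_eq_norm_sq, hu, one_pow]
  have hvv : ⟪v, v⟫ = 1 := by rw [real_inner_self_eq_norm_sq, hv, one_pow]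
  have hvp : ⟪v, p⟫ = 0 := by
    rw [inner_sub_right, real_inner_smul_right, hvv, real_inner_comm, ← hc, mul_one, sub_self]
  have hup : ⟪u, p⟫ = s := by rw [inner_sub_right, real_inner_smul_right, huu, ← hc]; ring
  have hpp : ⟪p, p⟫ = s := by
    rw [inner_sub_left, hup, real_inner_smul_left, hvp, mul_zero, sub_zero]
  have hpn : ⟪p, n⟫ = 0 := by
    rw [inner_sub_left, hun, real_inner_smul_left, hvn, mul_zero, sub_zero]
  set μ := √(s * (1 - t ^ 2))
  have hμ : μ ^ 2 = s * (1 - t ^ 2) := Real.sq_sqrt (by nlinarith)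
  refine ⟨c • v + t • p + μ • n, ?_, ?_, ?_⟩
  · have hzz : ⟪c • v + t • p + μ • n, c • v + t • p + μ • n⟫ = 1 := by
      simp only [inner_add_left, inner_add_right, real_inner_smul_left, real_inner_smul_right,
        real_inner_comm v p, real_inner_comm v n, real_inner_comm p n, hvv, hvp, hpp, hvn, hpn,
        real_inner_self_eq_norm_sq n, hn]
      linear_combination hμ
    rw [real_inner_self_eq_norm_sq] at hzz
    exact (pow_eq_one_iff_of_nonneg (norm_nonneg _) two_ne_zero).1 hzz
  · simp only [inner_add_right, real_inner_smul_right, hvv, hvp, hvn]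
    rw [real_inner_comm]
    ring
  · simp only [inner_add_right, real_inner_smul_right, hup, hun, ← hc]
    rw [div_mul_cancel₀ _ hs.ne']
    ring

def sphereCap (u : E) (k : ℝ) : Set E :=
  {y | ‖y‖ = 1 ∧ k ≤ ⟪u, y⟫}

namespace LinearIsometryEquiv

instance applyMulAction : MulAction (E ≃ₗᵢ[ℝ] E) E where
  smul A x := A x
  one_smul _ := rfl
  mul_smul _ _ _ := rfl

@[simp]
theorem smul_def (A : E ≃ₗᵢ[ℝ] E) (x : E) : A • x = A x :=
  rfl

variable (E) in
def toLinearEquivHom : (E ≃ₗᵢ[ℝ] E) →* (E ≃ₗ[ℝ] E) where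
  toFun A := A.toLinearEquiv
  map_one' := rfl
  map_mul' _ _ := rfl

variable (E) in
def det : (E ≃ₗᵢ[ℝ] E) →* ℝˣ :=
  LinearEquiv.det.comp (toLinearEquivHom E)

theorem coe_det (A : E ≃ₗᵢ[ℝ] E) :
    (det E A : ℝ) = LinearMap.det (A.toLinearEquiv : E →ₗ[ℝ] E) :=
  LinearEquiv.coe_det _

variable (E) in
def specialOrthogonal : Subgroup (E ≃ₗᵢ[ℝ] E) :=
  (det E).ker

theorem mem_specialOrthogonal_iff {A : E ≃ₗᵢ[ℝ] E} :
    A ∈ specialOrthogonal E ↔ LinearMap.det (A.toLinearEquiv : E →ₗ[ℝ] E) = 1 := by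
  rw [specialOrthogonal, MonoidHom.mem_ker, ← Units.val_inj, coe_det, Units.val_one]

theorem det_reflection_orthogonal_singleton [FiniteDimensional ℝ E] {z : E} (hz : z ≠ 0) :
    det E (reflection (ℝ ∙ z)ᗮ) = -1 := by
  rw [← Units.val_inj, coe_det]
  exact (det_reflection _).trans <| by
    rw [orthogonal_orthogonal, finrank_span_singleton hz, pow_one, Units.val_neg, Units.val_one]

theorem reflection_mul_reflection_mem_specialOrthogonal [FiniteDimensional ℝ E] {z z' : E}
    (hz : z ≠ 0) (hz' : z' ≠ 0) :
    reflection (ℝ ∙ z)ᗮ * reflection (ℝ ∙ z')ᗮ ∈ specialOrthogonal E := by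
  rw [specialOrthogonal, MonoidHom.mem_ker, map_mul, det_reflection_orthogonal_singleton hz,
    det_reflection_orthogonal_singleton hz', neg_one_mul, neg_neg]

def rotationsAbout (u : E) : Subgroup (E ≃ₗᵢ[ℝ] E) :=
  specialOrthogonal E ⊓ MulAction.stabilizer _ u

theorem mem_rotationsAbout_iff {u : E} {A : E ≃ₗᵢ[ℝ] E} :
    A ∈ rotationsAbout u ↔ A ∈ specialOrthogonal E ∧ A u = u :=
  Iff.rfl

theorem exists_mem_rotationsAbout_apply_eq [FiniteDimensional ℝ E] (h3 : 3 ≤ finrank ℝ E)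
    {w x y : E} (hxy : ‖x‖ = ‖y‖) (hw : ⟪w, x⟫ = ⟪w, y⟫) :
    ∃ A ∈ rotationsAbout w, A x = y := by
  rcases eq_or_ne x y with rfl | hne
  · exact ⟨1, one_mem _, rfl⟩
  have hfix {z v : E} (h : ⟪v, z⟫ = 0) : reflection (ℝ ∙ z)ᗮ v = v :=
    reflection_mem_subspace_eq_self <| mem_orthogonal_singleton_iff_inner_right.2 <| by
      rwa [real_inner_comm]
  obtain ⟨n, hn, hperp⟩ := exists_norm_eq_one_forall_inner_eq_zero (m := 2) h3 ![w, y]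
  have hn0 : n ≠ 0 := by rintro rfl; simp at hn
  have hwxy : ⟪w, x - y⟫ = 0 := by rw [inner_sub_right, hw, sub_self]
  refine ⟨reflection (ℝ ∙ n)ᗮ * reflection (ℝ ∙ (x - y))ᗮ, mem_rotationsAbout_iff.2
    ⟨reflection_mul_reflection_mem_specialOrthogonal hn0 (sub_ne_zero.2 hne), ?_⟩, ?_⟩
  · rw [coe_mul, Function.comp_apply, hfix hwxy, hfix (v := w) (hperp 0)]
  · rw [coe_mul, Function.comp_apply, reflection_sub hxy, hfix (v := y) (hperp 1)]

section Orbit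

open MulAction

variable {K : Subgroup (E ≃ₗᵢ[ℝ] E)} {u : E}

theorem rotationsAbout_le_of_mem_orbit (hK : K ≤ specialOrthogonal E)
    (hu : rotationsAbout u ≤ K) {a : E} (ha : a ∈ orbit K u) : rotationsAbout a ≤ K := by
  obtain ⟨⟨A, hA : A ∈ K⟩, rfl⟩ := ha
  intro B hB
  obtain ⟨hBdet, hBfix⟩ := mem_rotationsAbout_iff.1 hB
  have hconj : A⁻¹ * B * A ∈ rotationsAbout u := mem_rotationsAbout_iff.2
    ⟨mul_mem (mul_mem (inv_mem (hK hA)) hBdet) (hK hA), by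
      simpa [mul_smul] using congrArg A.symm hBfix⟩
  convert mul_mem (mul_mem hA (hu hconj)) (inv_mem hA) using 1
  group

theorem mem_orbit_of_inner_eq [FiniteDimensional ℝ E] (h3 : 3 ≤ finrank ℝ E) {a x y : E}
    (ha : rotationsAbout a ≤ K) (hx : x ∈ orbit K u) (hxy : ‖x‖ = ‖y‖)
    (hi : ⟪a, x⟫ = ⟪a, y⟫) : y ∈ orbit K u := by
  obtain ⟨B, hB, rfl⟩ := exists_mem_rotationsAbout_apply_eq h3 hxy hi
  obtain ⟨A, rfl⟩ := hx
  exact ⟨⟨B, ha hB⟩ * A, mul_smul _ _ _⟩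

theorem sphereCap_subset_orbit [FiniteDimensional ℝ E] (h3 : 3 ≤ finrank ℝ E) {v : E}
    (hu : rotationsAbout u ≤ K) (hv : rotationsAbout v ≤ K) (hu1 : ‖u‖ = 1) (hv1 : ‖v‖ = 1)
    (huv : |⟪u, v⟫| < 1) : sphereCap u (2 * ⟪u, v⟫ ^ 2 - 1) ⊆ orbit K u := by
  rintro y ⟨hy, hyu⟩
  have hy1 : ⟪u, y⟫ ≤ 1 := by simpa [hu1, hy] using real_inner_le_norm u y
  obtain ⟨z, hz, hvz, huz⟩ := exists_norm_eq_one_inner_eq_of_mem_Icc h3 hu1 hv1 huv ⟨hyu, hy1⟩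
  have hzK := mem_orbit_of_inner_eq h3 hv (mem_orbit_self u) (hu1.trans hz.symm) hvz.symm
  exact mem_orbit_of_inner_eq h3 hu hzK (hz.trans hy.symm) huz

theorem specialOrthogonal_le_of_sphere_subset_orbit (hK : K ≤ specialOrthogonal E)
    (hu : rotationsAbout u ≤ K) (hu1 : ‖u‖ = 1) (hs : Metric.sphere 0 1 ⊆ orbit K u) :
    specialOrthogonal E ≤ K := by
  intro A hA
  obtain ⟨⟨B, hB : B ∈ K⟩, hBu⟩ := hs (show A u ∈ Metric.sphere 0 1 by simp [hu1])
  have hBA : B⁻¹ * A ∈ rotationsAbout u := mem_rotationsAbout_iff.2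
    ⟨mul_mem (inv_mem (hK hB)) hA, by simpa using congrArg B.symm hBu.symm⟩
  simpa using mul_mem hB (hu hBA)

variable [FiniteDimensional ℝ E] (h3 : 3 ≤ finrank ℝ E) (hK : K ≤ specialOrthogonal E)
  (hu : rotationsAbout u ≤ K) (hu1 : ‖u‖ = 1)
include h3 hK hu hu1

theorem sphereCap_two_mul_sub_one_subset_orbit {k : ℝ} (hk : sphereCap u k ⊆ orbit K u) :
    sphereCap u (2 * k - 1) ⊆ orbit K u := by
  rintro y ⟨hy, hky⟩
  obtain ⟨a, ha, hay, hua⟩ := exists_unit_bisector (by omega) hu1 hy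
  have haK := rotationsAbout_le_of_mem_orbit hK hu (hk ⟨ha, by linarith⟩)
  exact mem_orbit_of_inner_eq h3 haK (mem_orbit_self u) (hu1.trans hy.symm) hay

theorem sphere_subset_orbit_of_sphereCap_subset {k : ℝ} (hk1 : k < 1)
    (hk : sphereCap u k ⊆ orbit K u) : Metric.sphere 0 1 ⊆ orbit K u := by
  have hiter (n : ℕ) : sphereCap u (1 - 2 ^ n * (1 - k)) ⊆ orbit K u := by
    induction n with
    | zero => simpa using hk
    | succ n ih =>
      convert sphereCap_two_mul_sub_one_subset_orbit h3 hK hu hu1 ih using 2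
      ring
  obtain ⟨n, hn⟩ := pow_unbounded_of_one_lt (2 / (1 - k)) one_lt_two
  rw [div_lt_iff₀ (by linarith)] at hn
  intro y hy
  rw [mem_sphere_zero_iff_norm] at hy
  refine hiter n ⟨hy, ?_⟩
  have := neg_le_of_abs_le (abs_real_inner_le_norm u y)
  rw [hu1, hy] at this
  linarith

end Orbit

theorem sup_rotationsAbout_eq [FiniteDimensional ℝ E] (h3 : 3 ≤ finrank ℝ E) {u v : E}
    (hu1 : ‖u‖ = 1) (hv1 : ‖v‖ = 1) (huv : |⟪u, v⟫| < 1) :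
    rotationsAbout u ⊔ rotationsAbout v = specialOrthogonal E := by
  set K := rotationsAbout u ⊔ rotationsAbout v
  have hK : K ≤ specialOrthogonal E := sup_le inf_le_left inf_le_left
  have hu : rotationsAbout u ≤ K := le_sup_left
  have hcap := sphereCap_subset_orbit h3 hu le_sup_right hu1 hv1 huv
  have hc : 2 * ⟪u, v⟫ ^ 2 - 1 < 1 := by nlinarith [(sq_lt_one_iff_abs_lt_one _).2 huv]
  exact hK.antisymm <| specialOrthogonal_le_of_sphere_subset_orbit hK hu hu1 <|
    sphere_subset_orbit_of_sphereCap_subset h3 hK hu hu1 hc hcap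

section Affine

variable {𝕜 V P : Type*} [NormedField 𝕜] [SeminormedAddCommGroup V] [NormedSpace 𝕜 V]
  [PseudoMetricSpace P] [NormedAddTorsor V P]

def toAffineIsometryEquivAt (p : P) : (V ≃ₗᵢ[𝕜] V) →* (P ≃ᵃⁱ[𝕜] P) where
  toFun A := (AffineIsometryEquiv.vaddConst 𝕜 p).symm.trans
    (A.toAffineIsometryEquiv.trans (AffineIsometryEquiv.vaddConst 𝕜 p))
  map_one' := by ext; simp
  map_mul' A B := by ext; simp

theorem toAffineIsometryEquivAt_apply (p : P) (A : V ≃ₗᵢ[𝕜] V) (x : P) :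
    toAffineIsometryEquivAt p A x = A (x -ᵥ p) +ᵥ p :=
  rfl

@[simp]
theorem linearIsometryEquiv_toAffineIsometryEquivAt (p : P) (A : V ≃ₗᵢ[𝕜] V) :
    (toAffineIsometryEquivAt p A).linearIsometryEquiv = A := by
  ext v
  have := (toAffineIsometryEquivAt p A).map_vadd p v
  rwa [toAffineIsometryEquivAt_apply, toAffineIsometryEquivAt_apply, vsub_self, map_zero,
    zero_vadd, vadd_vsub, eq_comm, vadd_right_cancel_iff] at this

theorem mem_map_toAffineIsometryEquivAt_iff {p : P} {H : Subgroup (V ≃ₗᵢ[𝕜] V)}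
    {f : P ≃ᵃⁱ[𝕜] P} :
    f ∈ H.map (toAffineIsometryEquivAt p) ↔ f p = p ∧ f.linearIsometryEquiv ∈ H := by
  refine ⟨?_, fun ⟨hfp, hf⟩ ↦ ⟨_, hf, ?_⟩⟩
  · rintro ⟨A, hA, rfl⟩
    simpa [toAffineIsometryEquivAt_apply] using hA
  · ext x
    rw [toAffineIsometryEquivAt_apply]
    conv_rhs => rw [← vsub_vadd x p, AffineIsometryEquiv.map_vadd, hfp]

end Affine

end LinearIsometryEquiv

theorem AffineIsometryEquiv.forall_mem_apply_eq_iff {𝕜 V P : Type*} [NormedField 𝕜]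
    [SeminormedAddCommGroup V] [NormedSpace 𝕜 V] [PseudoMetricSpace P] [NormedAddTorsor V P]
    (f : P ≃ᵃⁱ[𝕜] P) {l : AffineSubspace 𝕜 P} {p : P} (hp : p ∈ l) :
    (∀ x ∈ l, f x = x) ↔ f p = p ∧ ∀ v ∈ l.direction, f.linearIsometryEquiv v = v := by
  refine ⟨fun h ↦ ⟨h p hp, fun v hv ↦ ?_⟩, fun ⟨hfp, hlin⟩ x hx ↦ ?_⟩
  · have := h _ (AffineSubspace.vadd_mem_of_mem_direction hv hp)
    rwa [map_vadd, h p hp, vadd_right_cancel_iff] at this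
  · rw [← vsub_vadd x p, map_vadd, hfp, hlin _ (AffineSubspace.vsub_mem_direction hx hp)]

end

open LinearIsometryEquiv

theorem isOrientationPreserving_iff
    {f : EuclideanSpace ℝ (Fin 3) ≃ᵃⁱ[ℝ] EuclideanSpace ℝ (Fin 3)} :
    IsOrientationPreserving f ↔ f.linearIsometryEquiv ∈ specialOrthogonal _ :=
  mem_specialOrthogonal_iff.symm

theorem isRotationAbout_iff_mem_map {l : AffineSubspace ℝ (EuclideanSpace ℝ (Fin 3))}
    {P u : EuclideanSpace ℝ (Fin 3)} (hP : P ∈ l) (hl : l.direction = ℝ ∙ u)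
    {f : EuclideanSpace ℝ (Fin 3) ≃ᵃⁱ[ℝ] EuclideanSpace ℝ (Fin 3)} :
    IsRotationAbout l f ↔ f ∈ (rotationsAbout u).map (toAffineIsometryEquivAt P) := by
  have hfix : (∀ v ∈ ℝ ∙ u, f.linearIsometryEquiv v = v) ↔ f.linearIsometryEquiv u = u := by
    refine ⟨fun h ↦ h u (mem_span_singleton_self u), fun h v hv ↦ ?_⟩
    obtain ⟨r, rfl⟩ := mem_span_singleton.1 hv
    rw [_root_.map_smul, h]
  rw [mem_map_toAffineIsometryEquivAt_iff, IsRotationAbout, f.forall_mem_apply_eq_iff hP, hl,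
    hfix, isOrientationPreserving_iff, mem_rotationsAbout_iff]
  tauto

/-- For two distinct lines `l₁, l₂` in `ℝ³` through a common point `P`, the subgroup of
the isometry group generated by all rotations about `l₁` and all rotations about `l₂`
is exactly the group of orientation-preserving isometries of `ℝ³` fixing `P`. -/
theorem subgroup_generated_by_rotations_about_intersecting_lines
    (l₁ l₂ : AffineSubspace ℝ (EuclideanSpace ℝ (Fin 3)))
    (hl₁ : IsLine l₁) (hl₂ : IsLine l₂) (hne : l₁ ≠ l₂)
    (P : EuclideanSpace ℝ (Fin 3)) (hP₁ : P ∈ l₁) (hP₂ : P ∈ l₂) :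
    ∀ g : EuclideanSpace ℝ (Fin 3) ≃ᵃⁱ[ℝ] EuclideanSpace ℝ (Fin 3),
      g ∈ Subgroup.closure {f | IsRotationAbout l₁ f ∨ IsRotationAbout l₂ f} ↔
        (IsOrientationPreserving g ∧ g P = P) := by
  intro g
  obtain ⟨u, hu1, hu⟩ := exists_norm_eq_one_eq_span_singleton hl₁.2
  obtain ⟨v, hv1, hv⟩ := exists_norm_eq_one_eq_span_singleton hl₂.2
  have huv : |⟪u, v⟫| < 1 := abs_real_inner_lt_one_of_span_singleton_ne hu1 hv1 <| by
    rw [← hu, ← hv]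
    exact fun h ↦ hne (AffineSubspace.ext_of_direction_eq h ⟨P, hP₁, hP₂⟩)
  have hgen : {f | IsRotationAbout l₁ f ∨ IsRotationAbout l₂ f} =
      ((rotationsAbout u).map (toAffineIsometryEquivAt P) : Set _) ∪
        (rotationsAbout v).map (toAffineIsometryEquivAt P) := by
    ext f
    rw [Set.mem_ofPred_eq, isRotationAbout_iff_mem_map hP₁ hu, isRotationAbout_iff_mem_map hP₂ hv]
    rfl
  rw [hgen, ← Subgroup.sup_eq_closure, ← Subgroup.map_sup,
    sup_rotationsAbout_eq (by simp) hu1 hv1 huv, mem_map_toAffineIsometryEquivAt_iff,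
    isOrientationPreserving_iff, and_comm]
end

section
/- For every positive integer m, there exists a positive integer n such that for every coloring of the vertex set {0,1}ⁿ ⊂ ℝⁿ of the n-dimensional unit hypercube with an arbitrary set of colors, there exist either two distinct points x, y ∈ {0,1}ⁿ at Euclidean distance √2 with χ(x) = χ(y), or a rainbow isometric copy of {0, √2}^m (the vertex set of an m-dimensional hypercube of sidelength √2) inside {0,1}ⁿ. -/
/-!
Identify `{0,1}ⁿ` with `Finset (Fin n)`; the Euclidean distance of two vertices is then the square
root of the size of their symmetric difference. Doubling every coordinate embeds `{0,√2}ᵐ`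
isometrically as a family `E` of `2ᵐ` sets, and so does every image `y ∆ σ • E` under a translation
`y` and a coordinate permutation `σ`.

Suppose no two vertices at distance `√2` share a colour. For a fixed `y`, the `k`-sets `F` with
`χ (y ∆ F) = χ y` pairwise have symmetric difference of size `≠ 2`, so no two of them share a
`(k-1)`-subset and there are at most `C(n,k-1)/k = C(n,k)/(n-k+1)` of them. Since `σ • F` is
uniformly distributed among the `k`-sets, two fixed vertices of a random image `y ∆ σ • E` at
distance `√(2j)` get the same colour with probability at most `1/(n-2j+1) ≤ 1/(n-2m+1)`. For
`n = 4ᵐ + 2m` a union bound over the fewer than `4ᵐ` ordered pairs leaves a rainbow image.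
-/

open Finset Equiv symmDiff
open scoped Nat Pointwise

def cubeVertices (m : ℕ) (s : ℝ) : Set (EuclideanSpace ℝ (Fin m)) :=
  {x | ∀ i, x i = 0 ∨ x i = s}

theorem symmDiff_symmDiff_symmDiff_cancel_left {A : Type*} [GeneralizedBooleanAlgebra A]
    (a b c : A) : a ∆ b ∆ (a ∆ c) = b ∆ c := by
  rw [symmDiff_symmDiff_symmDiff_comm, symmDiff_self, bot_symmDiff]

namespace Finset

variable {α : Type*} [DecidableEq α]

lemma card_symmDiff_add_two_mul_card_inter (s t : Finset α) :
    #(s ∆ t) + 2 * #(s ∩ t) = #s + #t := by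
  have := card_union_add_card_inter s t
  have := card_le_card (inter_subset_union (s := s) (t := t))
  rw [symmDiff_eq_sup_sdiff_inf, sup_eq_union, inf_eq_inter,
    card_sdiff_of_subset inter_subset_union]
  omega

lemma exists_perm_smul_eq {s t : Finset α} (h : #s = #t) : ∃ σ : Perm α, σ • s = t := by
  have := Set.powersetCard.isPretransitive (α := α) (n := #t)
  obtain ⟨σ, hσ⟩ := MulAction.exists_smul_eq (Perm α) (Set.powersetCard.ofCard h)
    (Set.powersetCard.ofCard rfl)
  exact ⟨σ, congrArg Subtype.val hσ⟩

variable [Fintype α]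

theorem card_mul_le_choose_of_card_symmDiff_ne_two {𝒜 : Finset (Finset α)} {k : ℕ}
    (h𝒜 : (𝒜 : Set (Finset α)).Sized (k + 1))
    (h : (𝒜 : Set (Finset α)).Pairwise fun s t => #(s ∆ t) ≠ 2) :
    #𝒜 * (Fintype.card α - k) ≤ (Fintype.card α).choose (k + 1) := by
  -- A common `k`-subset of two distinct `(k+1)`-sets forces `#(s ∆ t) = 2`.
  have hdisj : (𝒜 : Set (Finset α)).PairwiseDisjoint (powersetCard k) := by
    intro s hs t ht hst
    refine disjoint_left.2 fun u hus hut => h hs ht hst ?_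
    rw [mem_powersetCard] at hus hut
    have hu : #u ≤ #(s ∩ t) := card_le_card (subset_inter hus.1 hut.1)
    have hlt : #(s ∩ t) < k + 1 := by
      rw [← h𝒜 hs]
      refine card_lt_card ⟨inter_subset_left, fun hsub => hst ?_⟩
      exact eq_of_subset_of_card_le (hsub.trans inter_subset_right) (by rw [h𝒜 hs, h𝒜 ht])
    have := card_symmDiff_add_two_mul_card_inter s t
    rw [h𝒜 hs, h𝒜 ht] at this
    omega
  have hshadow : #(𝒜.biUnion (powersetCard k)) = #𝒜 * (k + 1) := by
    rw [card_biUnion hdisj, sum_const_nat fun s hs => by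
      rw [card_powersetCard, h𝒜 hs, Nat.choose_succ_self_right]]
  have hsized : ((𝒜.biUnion (powersetCard k) : Finset (Finset α)) : Set (Finset α)).Sized k := by
    intro u hu
    obtain ⟨s, -, hus⟩ := mem_biUnion.1 hu
    exact (mem_powersetCard.1 hus).2
  have hle : #𝒜 * (k + 1) ≤ (Fintype.card α).choose k := hshadow ▸ hsized.card_le
  refine Nat.le_of_mul_le_mul_right ?_ k.succ_pos
  calc #𝒜 * (Fintype.card α - k) * (k + 1) = #𝒜 * (k + 1) * (Fintype.card α - k) := by ring
    _ ≤ (Fintype.card α).choose k * (Fintype.card α - k) := Nat.mul_le_mul_right _ hle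
    _ = (Fintype.card α).choose (k + 1) * (k + 1) := (Nat.choose_succ_right_eq _ _).symm

theorem card_filter_perm_smul_mul_choose (s : Finset α) (p : Finset α → Prop) [DecidablePred p] :
    #{σ : Perm α | p (σ • s)} * (Fintype.card α).choose #s
      = #{t : Finset α | #t = #s ∧ p t} * (Fintype.card α)! := by
  have hconst : ∀ t ∈ powersetCard #s univ,
      #{σ : Perm α | p (σ • t)} = #{σ : Perm α | p (σ • s)} := by
    intro t ht
    obtain ⟨τ, rfl⟩ := exists_perm_smul_eq (mem_powersetCard.1 ht).2.symm
    exact card_equiv (Equiv.mulRight τ) (by simp [mul_smul])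
  have hfiber : ∀ σ : Perm α,
      #{t ∈ powersetCard #s univ | p (σ • t)} = #{t : Finset α | #t = #s ∧ p t} := by
    intro σ
    refine card_nbij' (σ • ·) (σ⁻¹ • ·) ?_ ?_ ?_ ?_ <;> intro t <;>
      simp +contextual [card_smul_finset, smul_smul]
  -- Double count the pairs `(t, σ)` with `#t = #s` and `p (σ • t)`.
  have := sum_card_bipartiteAbove_eq_sum_card_bipartiteBelow (s := powersetCard #s univ)
    (t := (univ : Finset (Perm α))) (r := fun t σ => p (σ • t))
  simp only [bipartiteAbove, bipartiteBelow] at this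
  rw [sum_congr rfl hconst, sum_congr rfl fun σ _ => hfiber σ] at this
  simpa [card_powersetCard, Fintype.card_perm, mul_comm] using this

variable {β : Type*}

theorem card_perm_color_eq_mul_le [DecidableEq β] (c : Finset α → β)
    (hc : ∀ s t, #(s ∆ t) = 2 → c s ≠ c t) (y : Finset α) {s : Finset α} (hs : s.Nonempty) :
    #{σ : Perm α | c (y ∆ (σ • s)) = c y} * (Fintype.card α - #s + 1) ≤ (Fintype.card α)! := by
  obtain ⟨k, hk⟩ : ∃ k, #s = k + 1 := ⟨#s - 1, by have := hs.card_pos; omega⟩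
  have hkn : k + 1 ≤ Fintype.card α := hk ▸ card_le_univ s
  set 𝒜 : Finset (Finset α) := {t | #t = #s ∧ c (y ∆ t) = c y} with h𝒜
  have hsized : (𝒜 : Set (Finset α)).Sized (k + 1) := by
    intro t ht
    simp_all
  have hpair : (𝒜 : Set (Finset α)).Pairwise fun t u => #(t ∆ u) ≠ 2 := by
    intro t ht u hu htu h
    simp only [h𝒜, coe_filter, mem_univ, true_and, Set.mem_ofPred_eq] at ht hu
    refine hc (y ∆ t) (y ∆ u) ?_ (ht.2.trans hu.2.symm)
    rwa [symmDiff_symmDiff_symmDiff_cancel_left]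
  have hJ := card_mul_le_choose_of_card_symmDiff_ne_two hsized hpair
  have hU := card_filter_perm_smul_mul_choose s fun t => c (y ∆ t) = c y
  set X := #{σ : Perm α | c (y ∆ (σ • s)) = c y}
  refine Nat.le_of_mul_le_mul_right ?_ (Nat.choose_pos hkn)
  calc X * (Fintype.card α - #s + 1) * (Fintype.card α).choose (k + 1)
      = X * (Fintype.card α).choose #s * (Fintype.card α - k) := by
        rw [hk, show Fintype.card α - (k + 1) + 1 = Fintype.card α - k by omega]; ring
    _ = #𝒜 * (Fintype.card α - k) * (Fintype.card α)! := by
        rw [hU]; ring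
    _ ≤ (Fintype.card α).choose (k + 1) * (Fintype.card α)! := Nat.mul_le_mul_right _ hJ
    _ = (Fintype.card α)! * (Fintype.card α).choose (k + 1) := mul_comm _ _

theorem card_translate_perm_color_eq_mul_le [DecidableEq β] (c : Finset α → β)
    (hc : ∀ s t, #(s ∆ t) = 2 → c s ≠ c t) {s t : Finset α} (hst : s ≠ t) :
    #{p : Finset α × Perm α | c (p.1 ∆ (p.2 • s)) = c (p.1 ∆ (p.2 • t))}
        * (Fintype.card α - #(s ∆ t) + 1) ≤ 2 ^ Fintype.card α * (Fintype.card α)! := by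
  have hshift : #{p : Finset α × Perm α | c (p.1 ∆ (p.2 • s)) = c (p.1 ∆ (p.2 • t))}
      = #{p : Finset α × Perm α | c (p.1 ∆ (p.2 • (s ∆ t))) = c p.1} := by
    let shift (p : Finset α × Perm α) := (p.1 ∆ (p.2 • s), p.2)
    refine card_nbij' shift shift ?_ ?_ ?_ ?_ <;> intro p <;>
      simp [shift, smul_finset_symmDiff, ← symmDiff_assoc, eq_comm]
  rw [hshift, card_filter, Fintype.sum_prod_type, sum_mul]
  simp only [← card_filter]
  calc ∑ y : Finset α,
        #{σ : Perm α | c (y ∆ (σ • (s ∆ t))) = c y} * (Fintype.card α - #(s ∆ t) + 1)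
      ≤ ∑ _y : Finset α, (Fintype.card α)! :=
        sum_le_sum fun y _ => card_perm_color_eq_mul_le c hc y (symmDiff_nonempty.2 hst)
    _ = 2 ^ Fintype.card α * (Fintype.card α)! := by simp

theorem exists_translate_perm_injective_color {ι : Type*} [Fintype ι] (c : Finset α → β)
    (hc : ∀ s t, #(s ∆ t) = 2 → c s ≠ c t) {E : ι → Finset α} (hE : Function.Injective E)
    {d : ℕ} (hd : ∀ i j, #(E i ∆ E j) ≤ d) (hcard : Fintype.card ι ^ 2 + d ≤ Fintype.card α) :
    ∃ (y : Finset α) (σ : Perm α), Function.Injective fun i => c (y ∆ (σ • E i)) := by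
  classical
  set bad : ι × ι → Finset (Finset α × Perm α) :=
    fun ij => {p | c (p.1 ∆ (p.2 • E ij.1)) = c (p.1 ∆ (p.2 • E ij.2))}
  have hbad : ∀ ij ∈ (univ : Finset ι).offDiag,
      #(bad ij) * (Fintype.card α - d + 1) ≤ 2 ^ Fintype.card α * (Fintype.card α)! := by
    rintro ⟨i, j⟩ hij
    refine le_trans (Nat.mul_le_mul_left _ ?_)
      (card_translate_perm_color_eq_mul_le c hc (hE.ne (mem_offDiag.1 hij).2.2))
    have := hd i j
    dsimp only
    omega
  have hoff : #(univ : Finset ι).offDiag < Fintype.card α - d + 1 := by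
    rw [offDiag_card, card_univ]
    have := Nat.sub_le (Fintype.card ι * Fintype.card ι) (Fintype.card ι)
    rw [sq] at hcard
    omega
  have hlt :
      #((univ : Finset ι).offDiag.biUnion bad) < #(univ : Finset (Finset α × Perm α)) := by
    rw [card_univ, Fintype.card_prod, Fintype.card_finset, Fintype.card_perm]
    refine lt_of_mul_lt_mul_right (a := Fintype.card α - d + 1) ?_ (Nat.zero_le _)
    calc #((univ : Finset ι).offDiag.biUnion bad) * (Fintype.card α - d + 1)
        ≤ ∑ ij ∈ (univ : Finset ι).offDiag, #(bad ij) * (Fintype.card α - d + 1) := by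
          rw [← sum_mul]; exact Nat.mul_le_mul_right _ card_biUnion_le
      _ ≤ #(univ : Finset ι).offDiag * (2 ^ Fintype.card α * (Fintype.card α)!) :=
          sum_le_card_nsmul _ _ _ hbad
      _ < (Fintype.card α - d + 1) * (2 ^ Fintype.card α * (Fintype.card α)!) :=
          Nat.mul_lt_mul_of_pos_right hoff (by positivity)
      _ = 2 ^ Fintype.card α * (Fintype.card α)! * (Fintype.card α - d + 1) := mul_comm _ _
  obtain ⟨⟨y, σ⟩, -, hgood⟩ := exists_mem_notMem_of_card_lt_card hlt
  refine ⟨y, σ, fun i j hij => ?_⟩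
  by_contra hne
  exact hgood (mem_biUnion.2 ⟨(i, j), mem_offDiag.2 ⟨mem_univ _, mem_univ _, hne⟩,
    mem_filter.2 ⟨mem_univ _, hij⟩⟩)

theorem exists_card_symmDiff_eq_two_mul {m : ℕ} (h : 2 * m ≤ Fintype.card α) :
    ∃ E : Finset (Fin m) → Finset α, ∀ s t, #(E s ∆ E t) = 2 * #(s ∆ t) := by
  obtain ⟨e⟩ := Function.Embedding.nonempty_of_card_le (α := Fin m × Fin 2) (β := α)
    (by simpa [mul_comm] using h)
  refine ⟨fun s => (s ×ˢ univ).image e, fun s t => ?_⟩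
  have hprod : (s ×ˢ univ) ∆ (t ×ˢ univ) = (s ∆ t) ×ˢ (univ : Finset (Fin 2)) := by
    ext; simp [mem_symmDiff]
  rw [← image_symmDiff _ _ e.injective, hprod, card_image_of_injective _ e.injective,
    card_product, card_univ, Fintype.card_fin, mul_comm]

end Finset

section CubeVertices

variable {m n : ℕ}

noncomputable def vertexSupport (x : EuclideanSpace ℝ (Fin m)) : Finset (Fin m) := {i | x i ≠ 0}

theorem dist_eq_of_mem_cubeVertices {a : ℝ} {x y : EuclideanSpace ℝ (Fin m)}
    (hx : x ∈ cubeVertices m a) (hy : y ∈ cubeVertices m a) :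
    dist x y = |a| * √(#(vertexSupport x ∆ vertexSupport y)) := by
  have hterm : ∀ i, dist (x i) (y i) ^ 2
      = if i ∈ vertexSupport x ∆ vertexSupport y then a ^ 2 else 0 := by
    intro i
    by_cases ha : a = 0
    · have hxi := hx i; have hyi := hy i
      simp only [ha, or_self] at hxi hyi
      simp [vertexSupport, hxi, hyi, ha]
    rcases hx i with hxi | hxi <;> rcases hy i with hyi | hyi <;>
      simp [vertexSupport, mem_symmDiff, hxi, hyi, ha, Real.dist_eq, sq_abs]
  rw [EuclideanSpace.dist_eq, Fintype.sum_congr _ _ hterm, sum_ite_mem, univ_inter, sum_const,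
    nsmul_eq_mul, Real.sqrt_mul' _ (sq_nonneg a), Real.sqrt_sq_eq_abs, mul_comm]

theorem vertexSupport_injOn {a : ℝ} :
    Set.InjOn vertexSupport (cubeVertices m a) := fun x hx y hy h =>
  dist_eq_zero.1 (by rw [dist_eq_of_mem_cubeVertices hx hy, h, symmDiff_self]; simp)

def indicatorVertex (A : Finset (Fin n)) : EuclideanSpace ℝ (Fin n) :=
  WithLp.toLp 2 fun j => if j ∈ A then 1 else 0

theorem indicatorVertex_mem_cubeVertices (A : Finset (Fin n)) :
    indicatorVertex A ∈ cubeVertices n 1 := fun j => by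
  by_cases hj : j ∈ A <;> simp [indicatorVertex, hj]

@[simp]
theorem vertexSupport_indicatorVertex (A : Finset (Fin n)) :
    vertexSupport (indicatorVertex A) = A := by
  ext; simp [vertexSupport, indicatorVertex]

theorem dist_indicatorVertex (A B : Finset (Fin n)) :
    dist (indicatorVertex A) (indicatorVertex B) = √(#(A ∆ B)) := by
  rw [dist_eq_of_mem_cubeVertices (indicatorVertex_mem_cubeVertices A)
    (indicatorVertex_mem_cubeVertices B), vertexSupport_indicatorVertex,
    vertexSupport_indicatorVertex, abs_one, one_mul]

theorem dist_indicatorVertex_comp_vertexSupport {G : Finset (Fin m) → Finset (Fin n)}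
    (hG : ∀ s t, #(G s ∆ G t) = 2 * #(s ∆ t)) {x y : EuclideanSpace ℝ (Fin m)}
    (hx : x ∈ cubeVertices m √2) (hy : y ∈ cubeVertices m √2) :
    dist (indicatorVertex (G (vertexSupport x))) (indicatorVertex (G (vertexSupport y)))
      = dist x y := by
  rw [dist_indicatorVertex, hG, dist_eq_of_mem_cubeVertices hx hy, abs_of_pos (by positivity),
    Nat.cast_mul, Nat.cast_ofNat, Real.sqrt_mul zero_le_two]

end CubeVertices

theorem edge_or_rainbow_cube_general (m : ℕ) :
    ∃ n : ℕ, 0 < n ∧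
      ∀ (α : Type*) (χ : EuclideanSpace ℝ (Fin n) → α),
        (∃ x ∈ cubeVertices n 1, ∃ y ∈ cubeVertices n 1,
          x ≠ y ∧ dist x y = Real.sqrt 2 ∧ χ x = χ y) ∨
        (∃ f : EuclideanSpace ℝ (Fin m) → EuclideanSpace ℝ (Fin n),
          Set.InjOn f (cubeVertices m (Real.sqrt 2)) ∧
          (∀ x ∈ cubeVertices m (Real.sqrt 2), f x ∈ cubeVertices n 1) ∧
          (∀ x ∈ cubeVertices m (Real.sqrt 2), ∀ y ∈ cubeVertices m (Real.sqrt 2),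
            dist (f x) (f y) = dist x y) ∧
          (∀ x ∈ cubeVertices m (Real.sqrt 2), ∀ y ∈ cubeVertices m (Real.sqrt 2),
            χ (f x) = χ (f y) → x = y)) := by
  refine ⟨4 ^ m + 2 * m, by positivity, fun α χ => ?_⟩
  refine or_iff_not_imp_left.2 fun hedge => ?_
  push Not at hedge
  have hc : ∀ A B : Finset (Fin (4 ^ m + 2 * m)), #(A ∆ B) = 2 →
      χ (indicatorVertex A) ≠ χ (indicatorVertex B) := by
    intro A B hAB
    refine hedge _ (indicatorVertex_mem_cubeVertices A) _ (indicatorVertex_mem_cubeVertices B)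
      (fun h => ?_) (by rw [dist_indicatorVertex, hAB, Nat.cast_ofNat])
    rw [← vertexSupport_indicatorVertex A, h, vertexSupport_indicatorVertex, symmDiff_self] at hAB
    simp at hAB
  obtain ⟨E, hE⟩ := exists_card_symmDiff_eq_two_mul (α := Fin (4 ^ m + 2 * m)) (m := m) (by simp)
  have hEinj : Function.Injective E := fun s t h => by simpa [h, eq_comm] using hE s t
  obtain ⟨y, σ, hrainbow⟩ := exists_translate_perm_injective_color (χ ∘ indicatorVertex) hc hEinj
    (d := 2 * m) (fun s t => hE s t ▸ Nat.mul_le_mul_left 2 (card_le_univ _ |>.trans (by simp)))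
    (by simp [← pow_mul, pow_mul'])
  have hG : ∀ s t, #((y ∆ (σ • E s)) ∆ (y ∆ (σ • E t))) = 2 * #(s ∆ t) := fun s t => by
    rw [symmDiff_symmDiff_symmDiff_cancel_left, ← smul_finset_symmDiff, card_smul_finset, hE]
  refine ⟨fun x => indicatorVertex (y ∆ (σ • E (vertexSupport x))),
    fun x hx x' hx' h => vertexSupport_injOn hx hx' (hrainbow (congrArg χ h)),
    fun x _ => indicatorVertex_mem_cubeVertices _,
    fun x hx x' hx' => dist_indicatorVertex_comp_vertexSupport hG hx hx',
    fun x hx x' hx' h => vertexSupport_injOn hx hx' (hrainbow h)⟩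

/-- For every positive `m` there exists `n` such that every coloring of the vertex set
`{0,1}ⁿ` of the unit hypercube contains either two distinct same-colored points at
distance `√2`, or a rainbow isometric copy of `{0, √2}^m`. -/
theorem edge_or_rainbow_cube (m : ℕ) (hm : 0 < m) :
    ∃ n : ℕ, 0 < n ∧
      ∀ (α : Type*) (χ : EuclideanSpace ℝ (Fin n) → α),
        (∃ x ∈ cubeVertices n 1, ∃ y ∈ cubeVertices n 1,
          x ≠ y ∧ dist x y = Real.sqrt 2 ∧ χ x = χ y) ∨
        (∃ f : EuclideanSpace ℝ (Fin m) → EuclideanSpace ℝ (Fin n),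
          Set.InjOn f (cubeVertices m (Real.sqrt 2)) ∧
          (∀ x ∈ cubeVertices m (Real.sqrt 2), f x ∈ cubeVertices n 1) ∧
          (∀ x ∈ cubeVertices m (Real.sqrt 2), ∀ y ∈ cubeVertices m (Real.sqrt 2),
            dist (f x) (f y) = dist x y) ∧
          (∀ x ∈ cubeVertices m (Real.sqrt 2), ∀ y ∈ cubeVertices m (Real.sqrt 2),
            χ (f x) = χ (f y) → x = y)) :=
  edge_or_rainbow_cube_general m
end

section
/- Let m and d be positive integers with d > 4^m, and let S_d(2) ⊂ ℝ^d be the set of the d standard basis vectors of ℝ^d (a regular (d−1)-dimensional simplex of sidelength √2). Consider the Cartesian power S_d(2)^m ⊂ ℝ^{dm}, i.e., the set of tuples (x₁, …, x_m) where each x_j is a standard basis vector of ℝ^d. Then for every coloring of S_d(2)^m with an arbitrary set of colors, there exist either two distinct points of S_d(2)^m at Euclidean distance √2 with the same color, or a rainbow isometric copy of {0, √2}^m (the vertex set of an m-dimensional hypercube of sidelength √2) inside S_d(2)^m. -/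
/-- The Cartesian power `S_d(2)^m ⊂ ℝ^{dm}`: tuples of `m` standard basis vectors of
`ℝ^d`, viewed inside the Euclidean space with index set `Fin m × Fin d`. -/
def simplexPower (d m : ℕ) : Set (EuclideanSpace ℝ (Fin m × Fin d)) :=
  {x | ∀ j : Fin m, ∃ i : Fin d, ∀ i' : Fin d,
    x (j, i') = if i' = i then 1 else 0}

/-!
A point of `S_d(2)^m` is a tuple `u : Fin m → Fin d` (the point `(e_{u j})_j`), and two such points
are at distance `√2` exactly when the tuples differ in one coordinate. So either the coloring is not
proper on this Hamming graph, or it is and we look for a rainbow combinatorial subcube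
`ε ↦ (F j (ε j))_j` with each `F j : Bool ↪ Fin d`; such a subcube is an isometric copy of
`{0, √2}^m`. For a fixed pair `ε ≠ δ`, properness makes at most a `1 / (d - 1)` fraction of all `F`
give `ε` and `δ` the same color, and there are only `4^m - 2^m < d - 1` ordered pairs.
-/

open Finset Function Fintype

section Combinatorics

variable {ι β α : Type*}

def subcube (F : ι → Bool ↪ β) (ε : ι → Bool) : ι → β := fun j => F j (ε j)

lemma eq_of_forall_ne_eq_of_color_eq [Fintype ι] [DecidableEq β] {c : (ι → β) → α}
    (hc : ∀ u v, hammingDist u v = 1 → c u ≠ c v) {u v : ι → β} {j₀ : ι}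
    (huv : ∀ j, j ≠ j₀ → u j = v j) (hcuv : c u = c v) : u = v := by
  by_contra hne
  refine hc u v (le_antisymm ?_ (hammingDist_pos.2 hne)) hcuv
  calc hammingDist u v ≤ #{j₀} :=
        card_le_card fun j hj => mem_singleton.2 <| by_contra fun h => (mem_filter.1 hj).2 (huv j h)
    _ = 1 := card_singleton j₀

lemma card_filter_color_eq_mul_le [Fintype ι] [DecidableEq ι] [Fintype β] [DecidableEq β]
    [DecidableEq α] (c : (ι → β) → α)
    (hc : ∀ u v, hammingDist u v = 1 → c u ≠ c v) {ε δ : ι → Bool} (hεδ : ε ≠ δ) :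
    #{F : ι → Bool ↪ β | c (subcube F ε) = c (subcube F δ)} * (card β - 1) ≤
      card (ι → Bool ↪ β) := by
  obtain ⟨j₀, hj₀⟩ := Function.ne_iff.1 hεδ
  set R := card ({j // j ≠ j₀} → Bool ↪ β)
  have hcard : card (ι → Bool ↪ β) = card β * (card β - 1) * R := by
    rw [card_congr (Equiv.funSplitAt j₀ _), card_prod, card_embedding_eq, card_bool]
    simp [R, Nat.descFactorial, mul_comm]
  -- A bad `F` is determined by `F j₀ (ε j₀)` and the `F j` with `j ≠ j₀`: the remaining value
  -- `F j₀ (δ j₀)` is forced, since the coloring is proper along the `j₀`-th coordinate.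
  have hbad : #{F : ι → Bool ↪ β | c (subcube F ε) = c (subcube F δ)} ≤ card β * R := by
    rw [← card_prod, ← card_univ]
    refine card_le_card_of_injOn (fun F => (F j₀ (ε j₀), (Equiv.funSplitAt j₀ _ F).2))
      (fun _ _ => mem_univ _) ?_
    rintro F hF G hG hFG
    simp only [coe_filter, mem_univ, true_and, Set.mem_ofPred_eq] at hF hG
    simp only [Equiv.funSplitAt_apply, Prod.mk.injEq] at hFG
    obtain ⟨h₀, hrest⟩ := hFG
    have hoff : ∀ j, j ≠ j₀ → F j = G j := fun j hj => congrFun hrest ⟨j, hj⟩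
    have hε : subcube F ε = subcube G ε := funext fun j => by
      by_cases hj : j = j₀
      · subst hj; exact h₀
      · simp [subcube, hoff j hj]
    have hδ : subcube F δ = subcube G δ :=
      eq_of_forall_ne_eq_of_color_eq hc (j₀ := j₀) (fun j hj => by simp [subcube, hoff j hj])
        (by rw [← hF, hε, hG])
    funext j
    by_cases hj : j = j₀
    · subst hj
      ext b
      obtain rfl | rfl : b = ε j ∨ b = δ j := by
        revert hj₀; cases b <;> cases ε j <;> cases δ j <;> simp
      · exact h₀
      · exact congrFun hδ j
    · exact hoff j hj
  calc _ ≤ card β * R * (card β - 1) := Nat.mul_le_mul_right _ hbad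
    _ = card (ι → Bool ↪ β) := by rw [hcard]; ring

theorem exists_injective_comp_subcube [Fintype ι] [DecidableEq ι] [Fintype β] [DecidableEq β]
    (c : (ι → β) → α)
    (hc : ∀ u v, hammingDist u v = 1 → c u ≠ c v) (hβ : 4 ^ card ι < card β) :
    ∃ F : ι → Bool ↪ β, Injective (c ∘ subcube F) := by
  classical
  by_contra! hbad
  have hpairs : 2 ^ card ι * 2 ^ card ι - 2 ^ card ι < card β - 1 := by
    have h4 : 2 ^ card ι * 2 ^ card ι = 4 ^ card ι := by rw [← mul_pow]; norm_num
    have h1 : 1 ≤ 2 ^ card ι := Nat.one_le_two_pow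
    have h2 : 2 ^ card ι ≤ 4 ^ card ι := Nat.pow_le_pow_left (by norm_num) _
    omega
  have hN : 0 < card (ι → Bool ↪ β) := by
    rw [card_fun, card_embedding_eq, card_bool]
    exact pow_pos (Nat.descFactorial_pos.2 (by omega)) _
  set N := card (ι → Bool ↪ β)
  set pairs := (univ : Finset (ι → Bool)).offDiag
  have hcover : (univ : Finset (ι → Bool ↪ β)) ⊆
      pairs.biUnion fun q => {F | c (subcube F q.1) = c (subcube F q.2)} := by
    intro F _
    obtain ⟨ε, δ, hcεδ, hεδ⟩ := not_injective_iff.1 (hbad F)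
    exact mem_biUnion.2 ⟨(ε, δ), by simpa [pairs] using hεδ, by simpa using hcεδ⟩
  have hcount : N * (card β - 1) ≤ (2 ^ card ι * 2 ^ card ι - 2 ^ card ι) * N :=
    calc N * (card β - 1)
        ≤ (∑ q ∈ pairs, #{F : ι → Bool ↪ β | c (subcube F q.1) = c (subcube F q.2)}) *
            (card β - 1) :=
          Nat.mul_le_mul_right _ ((card_le_card hcover).trans card_biUnion_le)
      _ = ∑ q ∈ pairs,
            #{F : ι → Bool ↪ β | c (subcube F q.1) = c (subcube F q.2)} * (card β - 1) :=
          sum_mul _ _ _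
      _ ≤ ∑ q ∈ pairs, N :=
          sum_le_sum fun q hq => card_filter_color_eq_mul_le c hc (mem_offDiag.1 hq).2.2
      _ = (2 ^ card ι * 2 ^ card ι - 2 ^ card ι) * N := by
          rw [sum_const, offDiag_card, card_univ, card_fun, card_bool, smul_eq_mul]
  nlinarith [(Nat.mul_lt_mul_left hN).2 hpairs]

end Combinatorics

section Geometry

variable {ι β : Type*}

def cubePoint (s : ℝ) (ε : ι → Bool) : EuclideanSpace ℝ ι :=
  WithLp.toLp 2 fun j => if ε j then s else 0

def graphIndicator [DecidableEq β] (u : ι → β) : EuclideanSpace ℝ (ι × β) :=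
  WithLp.toLp 2 fun p => if p.2 = u p.1 then 1 else 0

lemma sum_ite_eq_zero_eq_mul_hammingDist [Fintype ι] [DecidableEq β] (u v : ι → β) (a : ℝ) :
    ∑ i, (if u i = v i then 0 else a) = a * hammingDist u v := by
  simp [hammingDist, sum_ite, mul_comm]

lemma dist_cubePoint [Fintype ι] (s : ℝ) (ε δ : ι → Bool) :
    dist (cubePoint s ε) (cubePoint s δ) = √(s ^ 2 * hammingDist ε δ) := by
  rw [EuclideanSpace.dist_eq, ← sum_ite_eq_zero_eq_mul_hammingDist]
  congr 1
  refine sum_congr rfl fun j _ => ?_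
  cases hε : ε j <;> cases hδ : δ j <;> simp [cubePoint, Real.dist_eq, hε, hδ]

lemma dist_graphIndicator [Fintype ι] [Fintype β] [DecidableEq β] (u v : ι → β) :
    dist (graphIndicator u) (graphIndicator v) = √(2 * hammingDist u v) := by
  rw [EuclideanSpace.dist_eq, ← sum_ite_eq_zero_eq_mul_hammingDist, Fintype.sum_prod_type]
  congr 1
  refine sum_congr rfl fun j _ => ?_
  split_ifs with h
  · simp [graphIndicator, h]
  · have hterm : ∀ b : β, dist (graphIndicator u (j, b)) (graphIndicator v (j, b)) ^ 2 =
        (if b = u j then 1 else 0) + (if b = v j then 1 else 0) := by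
      intro b
      by_cases hu : b = u j <;> by_cases hv : b = v j <;> simp_all [graphIndicator, Real.dist_eq]
    simp only [hterm, sum_add_distrib, Fintype.sum_ite_eq']
    norm_num

lemma dist_graphIndicator_subcube [Fintype ι] [Fintype β] [DecidableEq β]
    (F : ι → Bool ↪ β) (ε δ : ι → Bool) :
    dist (graphIndicator (subcube F ε)) (graphIndicator (subcube F δ)) =
      dist (cubePoint √2 ε) (cubePoint √2 δ) := by
  unfold subcube
  rw [dist_graphIndicator, dist_cubePoint, Real.sq_sqrt zero_le_two,
    hammingDist_comp (fun j => F j) fun j => (F j).injective]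

lemma graphIndicator_mem_simplexPower {m d : ℕ} (u : Fin m → Fin d) :
    graphIndicator u ∈ simplexPower d m :=
  fun j => ⟨u j, fun _ => rfl⟩

lemma cubePoint_ne_zero_eq_of_mem_cubeVertices {m : ℕ} {s : ℝ} {x : EuclideanSpace ℝ (Fin m)}
    (hx : x ∈ cubeVertices m s) : cubePoint s (fun j => x j ≠ 0) = x := by
  ext j
  rcases hx j with h | h <;> by_cases hs : s = 0 <;> simp [cubePoint, h, hs]

end Geometry

theorem simplex_power_edge_or_rainbow_cube_general (m d : ℕ) (hd : 4 ^ m < d)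
    {α : Type*} (χ : EuclideanSpace ℝ (Fin m × Fin d) → α) :
    (∃ x ∈ simplexPower d m, ∃ y ∈ simplexPower d m,
      x ≠ y ∧ dist x y = Real.sqrt 2 ∧ χ x = χ y) ∨
    (∃ f : EuclideanSpace ℝ (Fin m) → EuclideanSpace ℝ (Fin m × Fin d),
      Set.InjOn f (cubeVertices m (Real.sqrt 2)) ∧
      (∀ x ∈ cubeVertices m (Real.sqrt 2), f x ∈ simplexPower d m) ∧
      (∀ x ∈ cubeVertices m (Real.sqrt 2), ∀ y ∈ cubeVertices m (Real.sqrt 2),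
        dist (f x) (f y) = dist x y) ∧
      (∀ x ∈ cubeVertices m (Real.sqrt 2), ∀ y ∈ cubeVertices m (Real.sqrt 2),
        χ (f x) = χ (f y) → x = y)) := by
  by_cases hproper : ∀ u v : Fin m → Fin d, hammingDist u v = 1 →
      χ (graphIndicator u) ≠ χ (graphIndicator v)
  · right
    obtain ⟨F, hF⟩ := exists_injective_comp_subcube (χ ∘ graphIndicator) hproper (by simpa using hd)
    have hrainbow : ∀ x ∈ cubeVertices m √2, ∀ y ∈ cubeVertices m √2,
        χ (graphIndicator (subcube F fun j => x j ≠ 0)) =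
          χ (graphIndicator (subcube F fun j => y j ≠ 0)) → x = y := fun x hx y hy h =>
      calc x = cubePoint √2 fun j => x j ≠ 0 := (cubePoint_ne_zero_eq_of_mem_cubeVertices hx).symm
        _ = cubePoint √2 fun j => y j ≠ 0 := by rw [hF h]
        _ = y := cubePoint_ne_zero_eq_of_mem_cubeVertices hy
    refine ⟨fun x => graphIndicator (subcube F fun j => x j ≠ 0),
      fun x hx y hy h => hrainbow x hx y hy (congrArg χ h),
      fun x _ => graphIndicator_mem_simplexPower _, fun x hx y hy => ?_, hrainbow⟩
    rw [dist_graphIndicator_subcube, cubePoint_ne_zero_eq_of_mem_cubeVertices hx,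
      cubePoint_ne_zero_eq_of_mem_cubeVertices hy]
  · left
    push Not at hproper
    obtain ⟨u, v, huv, hχ⟩ := hproper
    have hdist : dist (graphIndicator u) (graphIndicator v) = √2 := by
      rw [dist_graphIndicator, huv, Nat.cast_one, mul_one]
    exact ⟨_, graphIndicator_mem_simplexPower u, _, graphIndicator_mem_simplexPower v,
      dist_pos.1 (hdist ▸ by positivity), hdist, hχ⟩

/-- If `d > 4^m`, then every coloring of `S_d(2)^m` with an arbitrary set of colors
contains either two distinct same-colored points at Euclidean distance `√2`, or a
rainbow isometric copy of the vertex set `{0, √2}^m` inside `S_d(2)^m`. -/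
theorem simplex_power_edge_or_rainbow_cube (m d : ℕ) (hm : 0 < m) (hd : 4 ^ m < d)
    {α : Type*} (χ : EuclideanSpace ℝ (Fin m × Fin d) → α) :
    (∃ x ∈ simplexPower d m, ∃ y ∈ simplexPower d m,
      x ≠ y ∧ dist x y = Real.sqrt 2 ∧ χ x = χ y) ∨
    (∃ f : EuclideanSpace ℝ (Fin m) → EuclideanSpace ℝ (Fin m × Fin d),
      Set.InjOn f (cubeVertices m (Real.sqrt 2)) ∧
      (∀ x ∈ cubeVertices m (Real.sqrt 2), f x ∈ simplexPower d m) ∧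
      (∀ x ∈ cubeVertices m (Real.sqrt 2), ∀ y ∈ cubeVertices m (Real.sqrt 2),
        dist (f x) (f y) = dist x y) ∧
      (∀ x ∈ cubeVertices m (Real.sqrt 2), ∀ y ∈ cubeVertices m (Real.sqrt 2),
        χ (f x) = χ (f y) → x = y)) :=
  simplex_power_edge_or_rainbow_cube_general m d hd χ
end

section
/- Let r and m be positive integers and let n₁, …, n_m be positive integers satisfying n₁ > r and n_{j+1} > (n₁ · n₂ ⋯ n_j)^r for every 1 ≤ j ≤ m−1. For each j let S_{n_j}(2) ⊂ ℝ^{n_j} be the set of standard basis vectors of ℝ^{n_j}. Then for every r-coloring of the Cartesian product S_{n₁}(2) × ⋯ × S_{n_m}(2) ⊂ ℝ^{n₁+⋯+n_m}, there exists a monochromatic isometric copy of {0, √2}^m (the vertex set of an m-dimensional hypercube of sidelength √2). -/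
/-- The Cartesian product `S_{n 0}(2) × ⋯ × S_{n (m-1)}(2)`: tuples whose `j`-th entry
is a standard basis vector of `ℝ^{n j}`, viewed inside the Euclidean space with index
set `(j : Fin m) × Fin (n j)`. -/
def simplexProduct (m : ℕ) (n : Fin m → ℕ) :
    Set (EuclideanSpace ℝ ((j : Fin m) × Fin (n j))) :=
  {x | ∀ j : Fin m, ∃ i : Fin (n j), ∀ i' : Fin (n j),
    x ⟨j, i'⟩ = if i' = i then 1 else 0}

/-!
A point of `S_{n₁}(2) × ⋯ × S_{n_m}(2)` is determined by the positions `v j` of its ones, and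
two such points are at distance `√(2 · #{j | v j ≠ w j})`. Hence a combinatorial cube
`∏ j, {a j, b j}` with `a j ≠ b j` is an isometric copy of `{0, √2}^m`, and it suffices to
find a monochromatic combinatorial cube. This is done by induction on `m`: every layer `t` of the
last coordinate contains a monochromatic cube of dimension `m - 1`, and since `n_m` exceeds `r`
times the number of such cubes (at most `(n₁ ⋯ n_{m-1})^r` for `r ≠ 1`), two layers `t < t'`
carry the same cube in the same colour; together they span an `m`-dimensional one.
-/
open Finset

theorem two_mul_choose_two_le_sq (k : ℕ) : 2 * k.choose 2 ≤ k ^ 2 := by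
  rw [Nat.choose_two_right, sq]
  calc 2 * (k * (k - 1) / 2) ≤ k * (k - 1) := Nat.mul_div_le _ _
    _ ≤ k * k := Nat.mul_le_mul_left _ (Nat.sub_le _ _)

theorem mul_prod_choose_two_le_prod_pow {ι : Type*} {s : Finset ι} (hs : s.Nonempty)
    (f : ι → ℕ) {r : ℕ} (hr : r ≠ 1) :
    r * ∏ i ∈ s, (f i).choose 2 ≤ (∏ i ∈ s, f i) ^ r := by
  set C := ∏ i ∈ s, (f i).choose 2
  set N := ∏ i ∈ s, f i
  have hCN : 2 * C ≤ N ^ 2 := calc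
    2 * C ≤ 2 ^ #s * C := by
      gcongr
      exact Nat.le_self_pow (Finset.card_ne_zero.2 hs) 2
    _ = ∏ i ∈ s, 2 * (f i).choose 2 := by rw [prod_mul_distrib, prod_const]
    _ ≤ ∏ i ∈ s, f i ^ 2 := prod_le_prod' fun i _ => two_mul_choose_two_le_sq (f i)
    _ = N ^ 2 := prod_pow _ _ _
  obtain rfl | ⟨k, rfl⟩ : r = 0 ∨ ∃ k, r = k + 2 := by
    rcases r with _ | _ | k <;> simp_all
  · simp
  rcases Nat.eq_zero_or_pos C with hC | hC
  · simp [hC]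
  have hN : 2 ≤ N := by
    by_contra! hN
    interval_cases N <;> omega
  calc (k + 2) * C ≤ 2 ^ (k + 1) * C := by
        gcongr
        exact Nat.lt_two_pow_self
    _ = 2 ^ k * (2 * C) := by ring
    _ ≤ N ^ k * N ^ 2 := by gcongr
    _ = N ^ (k + 2) := by ring

theorem sum_sq_sub_ite_eq {α : Type*} [Fintype α] [DecidableEq α] (a b : α) :
    ∑ i, ((if i = a then 1 else 0) - (if i = b then 1 else 0) : ℝ) ^ 2 =
      if a = b then 0 else 2 := by
  split_ifs with hab
  · simp [hab]
  · rw [Fintype.sum_eq_add a b hab fun i hi => by simp [hi.1, hi.2]]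
    simp [hab, Ne.symm hab, one_add_one_eq_two]

section MonoCube

variable {κ : Type*} {m : ℕ} {n : Fin m → ℕ}

def IsMonoCube (c : (∀ j, Fin (n j)) → κ) (a b : ∀ j, Fin (n j)) : Prop :=
  (∀ j, a j < b j) ∧ ∀ v : ∀ j, Fin (n j), (∀ j, v j = a j ∨ v j = b j) → c v = c a

theorem exists_isMonoCube_of_subsingleton [Subsingleton κ] (hn : ∀ j, 2 ≤ n j)
    (c : (∀ j, Fin (n j)) → κ) : ∃ a b, IsMonoCube c a b :=
  ⟨fun j => ⟨0, by linarith [hn j]⟩, fun j => ⟨1, hn j⟩, fun _ => Fin.mk_lt_mk.2 one_pos,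
    fun _ _ => Subsingleton.elim _ _⟩

theorem IsMonoCube.snoc {n : Fin (m + 1) → ℕ} {c : (∀ j, Fin (n j)) → κ}
    {a b : ∀ j : Fin m, Fin (n j.castSucc)} {t t' : Fin (n (Fin.last m))}
    (h : IsMonoCube (fun v => c (Fin.snoc v t)) a b)
    (h' : IsMonoCube (fun v => c (Fin.snoc v t')) a b)
    (htt' : t < t') (hc : c (Fin.snoc a t) = c (Fin.snoc a t')) :
    IsMonoCube c (Fin.snoc a t) (Fin.snoc b t') := by
  refine ⟨Fin.lastCases (by simpa using htt') fun j => by simpa using h.1 j, fun v hv => ?_⟩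
  have hinit : ∀ j, Fin.init v j = a j ∨ Fin.init v j = b j := fun j => by
    simpa [Fin.init] using hv j.castSucc
  rw [← Fin.snoc_init_self v]
  rcases (by simpa using hv (Fin.last m) : v (Fin.last m) = t ∨ v (Fin.last m) = t')
    with hlast | hlast
  · rw [hlast]
    exact h.2 _ hinit
  · rw [hlast, hc]
    exact h'.2 _ hinit

theorem exists_isMonoCube_snoc [Fintype κ] {n : Fin (m + 1) → ℕ}
    (ih : ∀ c : (∀ j : Fin m, Fin (n j.castSucc)) → κ, ∃ a b, IsMonoCube c a b)
    (hlast : Fintype.card κ * ∏ j : Fin m, (n j.castSucc).choose 2 < n (Fin.last m))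
    (c : (∀ j, Fin (n j)) → κ) : ∃ a b, IsMonoCube c a b := by
  classical
  choose a b hab using fun t => ih fun v => c (Fin.snoc v t)
  let F (t : Fin (n (Fin.last m))) :
      (∀ j : Fin m, {q : Fin (n j.castSucc) × Fin (n j.castSucc) // q.1 < q.2}) × κ :=
    (fun j => ⟨(a t j, b t j), (hab t).1 j⟩, c (Fin.snoc (a t) t))
  obtain ⟨t, t', hne, hF⟩ := Fintype.exists_ne_map_eq_of_card_lt F <| by
    simpa [Fintype.card_subtype, Fintype.card_product_filter_lt, mul_comm] using hlast
  wlog htt' : t < t' generalizing t t'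
  · exact this t' t hne.symm hF.symm (hne.lt_or_gt.resolve_left htt')
  have hpair : ∀ j, a t j = a t' j ∧ b t j = b t' j := fun j => by
    simpa [F, Prod.ext_iff] using congrArg (fun p => (p.1 j).1) hF
  have ha : a t = a t' := funext fun j => (hpair j).1
  have hb : b t = b t' := funext fun j => (hpair j).2
  refine ⟨_, _, (hab t).snoc (ha ▸ hb ▸ hab t') htt' ?_⟩
  simpa [F, ha] using congrArg Prod.snd hF

theorem exists_isMonoCube [Fintype κ]
    (hn : ∀ j, Fintype.card κ * ∏ i < j, (n i).choose 2 < n j)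
    (c : (∀ j, Fin (n j)) → κ) : ∃ a b, IsMonoCube c a b := by
  induction m with
  | zero => exact ⟨finZeroElim, finZeroElim, finZeroElim,
      fun v _ => congrArg c (Subsingleton.elim _ _)⟩
  | succ m ih =>
    refine exists_isMonoCube_snoc (fun c' => ih (fun j => ?_) c') ?_ c
    · simpa [Fin.prod_Iio_castSucc] using hn j.castSucc
    · simpa [Fin.Iio_last_eq_map] using hn (Fin.last m)

end MonoCube

theorem exists_isMonoCube_of_pow_prod_lt {r m : ℕ} {n : Fin m → ℕ}
    (h0 : ∀ j : Fin m, (j : ℕ) = 0 → r < n j)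
    (hgrowth : ∀ j : Fin m, (j : ℕ) ≠ 0 → (∏ i < j, n i) ^ r < n j)
    (c : (∀ j, Fin (n j)) → Fin r) : ∃ a b, IsMonoCube c a b := by
  rcases eq_or_ne r 1 with rfl | hr
  -- With one colour the counting bound fails, but then every cube is monochromatic.
  · have hpos : ∀ j, 0 < n j := fun j => by
      by_cases hj : (j : ℕ) = 0
      · exact Nat.zero_lt_of_lt (h0 j hj)
      · exact Nat.zero_lt_of_lt (hgrowth j hj)
    refine exists_isMonoCube_of_subsingleton (fun j => ?_) c
    by_cases hj : (j : ℕ) = 0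
    · exact h0 j hj
    · have hprod := prod_pos fun i (_ : i ∈ Iio j) => hpos i
      have hlt := hgrowth j hj
      rw [pow_one] at hlt
      omega
  · refine exists_isMonoCube (fun j => ?_) c
    rw [Fintype.card_fin]
    by_cases hj : (j : ℕ) = 0
    · have : Iio j = ∅ := by ext i; simp [Fin.lt_def, hj]
      simpa [this] using h0 j hj
    · have hne : (Iio j).Nonempty := ⟨⟨0, j.pos⟩, by simp [Fin.lt_def]; omega⟩
      exact (mul_prod_choose_two_le_prod_pow hne n hr).trans_lt (hgrowth j hj)

section SimplexProduct

variable {m : ℕ} {n : Fin m → ℕ}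

def simplexPoint (v : ∀ j, Fin (n j)) : EuclideanSpace ℝ ((j : Fin m) × Fin (n j)) :=
  WithLp.toLp 2 fun p => if p.2 = v p.1 then 1 else 0

theorem simplexPoint_mem_simplexProduct (v : ∀ j, Fin (n j)) :
    simplexPoint v ∈ simplexProduct m n :=
  fun j => ⟨v j, fun _ => rfl⟩

theorem dist_simplexPoint (v w : ∀ j, Fin (n j)) :
    dist (simplexPoint v) (simplexPoint w) = √(2 * #{j | v j ≠ w j}) := by
  rw [EuclideanSpace.dist_eq, ← univ_sigma_univ, sum_sigma]
  simp only [simplexPoint, Real.dist_eq, sq_abs, sum_sq_sub_ite_eq]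
  rw [sum_ite, sum_const_zero, zero_add, sum_const, nsmul_eq_mul, mul_comm]

noncomputable def cubeSelect (a b : ∀ j, Fin (n j)) (x : EuclideanSpace ℝ (Fin m)) :
    ∀ j, Fin (n j) :=
  fun j => if x j = 0 then a j else b j

theorem cubeSelect_eq_or (a b : ∀ j, Fin (n j)) (x : EuclideanSpace ℝ (Fin m)) (j : Fin m) :
    cubeSelect a b x j = a j ∨ cubeSelect a b x j = b j := by
  unfold cubeSelect
  split_ifs <;> simp

theorem dist_of_mem_cubeVertices {s : ℝ} {x y : EuclideanSpace ℝ (Fin m)}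
    (hx : x ∈ cubeVertices m s) (hy : y ∈ cubeVertices m s) :
    dist x y = √(s ^ 2 * #{i | x i ≠ y i}) := by
  have hterm : ∀ i, dist (x i) (y i) ^ 2 = if x i ≠ y i then s ^ 2 else 0 := fun i => by
    rcases hx i with h | h <;> rcases hy i with h' | h' <;> simp [h, h', Real.dist_eq, eq_comm]
  rw [EuclideanSpace.dist_eq, Finset.sum_congr rfl fun i _ => hterm i, sum_ite, sum_const_zero,
    add_zero, sum_const, nsmul_eq_mul, mul_comm]

theorem dist_simplexPoint_cubeSelect {a b : ∀ j, Fin (n j)} (hab : ∀ j, a j ≠ b j)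
    {x y : EuclideanSpace ℝ (Fin m)} (hx : x ∈ cubeVertices m √2)
    (hy : y ∈ cubeVertices m √2) :
    dist (simplexPoint (cubeSelect a b x)) (simplexPoint (cubeSelect a b y)) = dist x y := by
  have hsel : ∀ j, cubeSelect a b x j ≠ cubeSelect a b y j ↔ x j ≠ y j := fun j => by
    rcases hx j with h | h <;> rcases hy j with h' | h' <;>
      simp [cubeSelect, h, h', hab j, (hab j).symm, (Real.sqrt_pos.2 two_pos).ne]
  rw [dist_simplexPoint, dist_of_mem_cubeVertices hx hy, Real.sq_sqrt zero_le_two,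
    filter_congr fun j _ => hsel j]

end SimplexProduct

theorem simplex_product_mono_cube_general (r m : ℕ) (hm : 0 < m)
    (n : Fin m → ℕ)
    (h0 : r < n ⟨0, hm⟩)
    (hstep : ∀ j : Fin m, ∀ hj : j.val + 1 < m,
      (∏ i ∈ Finset.univ.filter (fun i => i ≤ j), n i) ^ r < n ⟨j.val + 1, hj⟩) :
    ∀ χ : EuclideanSpace ℝ ((j : Fin m) × Fin (n j)) → Fin r,
      ∃ f : EuclideanSpace ℝ (Fin m) → EuclideanSpace ℝ ((j : Fin m) × Fin (n j)),
        Set.InjOn f (cubeVertices m (Real.sqrt 2)) ∧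
        (∀ x ∈ cubeVertices m (Real.sqrt 2), f x ∈ simplexProduct m n) ∧
        (∀ x ∈ cubeVertices m (Real.sqrt 2), ∀ y ∈ cubeVertices m (Real.sqrt 2),
          dist (f x) (f y) = dist x y) ∧
        (∀ x ∈ cubeVertices m (Real.sqrt 2), ∀ y ∈ cubeVertices m (Real.sqrt 2),
          χ (f x) = χ (f y)) := by
  intro χ
  have hgrowth : ∀ j : Fin m, (j : ℕ) ≠ 0 → (∏ i < j, n i) ^ r < n j := by
    rintro ⟨_ | k, hk⟩ hj
    · exact absurd rfl hj
    · convert hstep ⟨k, by omega⟩ hk using 3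
      ext i
      simp [Fin.lt_def, Fin.le_def]
  obtain ⟨a, b, hab, hmono⟩ := exists_isMonoCube_of_pow_prod_lt
    (fun j hj => (Fin.ext hj : j = ⟨0, hm⟩) ▸ h0) hgrowth (χ ∘ simplexPoint)
  have hdist : ∀ x ∈ cubeVertices m √2, ∀ y ∈ cubeVertices m √2,
      dist (simplexPoint (cubeSelect a b x)) (simplexPoint (cubeSelect a b y)) = dist x y :=
    fun x hx y hy => dist_simplexPoint_cubeSelect (fun j => (hab j).ne) hx hy
  refine ⟨fun x => simplexPoint (cubeSelect a b x), fun x hx y hy hxy => ?_,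
    fun x _ => simplexPoint_mem_simplexProduct _, hdist, fun x _ y _ => ?_⟩
  · exact dist_eq_zero.1 ((hdist x hx y hy).symm.trans (dist_eq_zero.2 hxy))
  · exact (hmono _ (cubeSelect_eq_or a b x)).trans (hmono _ (cubeSelect_eq_or a b y)).symm

/-- If `n 0 > r` and `n (j+1) > (n 0 ⋯ n j)^r` for all `j`, then every `r`-coloring of
`S_{n 0}(2) × ⋯ × S_{n (m-1)}(2)` contains a monochromatic isometric copy of the vertex
set `{0, √2}^m` of an `m`-dimensional hypercube of sidelength `√2`. -/
theorem simplex_product_mono_cube (r m : ℕ) (hr : 0 < r) (hm : 0 < m)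
    (n : Fin m → ℕ) (hpos : ∀ j, 0 < n j)
    (h0 : r < n ⟨0, hm⟩)
    (hstep : ∀ j : Fin m, ∀ hj : j.val + 1 < m,
      (∏ i ∈ Finset.univ.filter (fun i => i ≤ j), n i) ^ r < n ⟨j.val + 1, hj⟩) :
    ∀ χ : EuclideanSpace ℝ ((j : Fin m) × Fin (n j)) → Fin r,
      ∃ f : EuclideanSpace ℝ (Fin m) → EuclideanSpace ℝ ((j : Fin m) × Fin (n j)),
        Set.InjOn f (cubeVertices m (Real.sqrt 2)) ∧
        (∀ x ∈ cubeVertices m (Real.sqrt 2), f x ∈ simplexProduct m n) ∧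
        (∀ x ∈ cubeVertices m (Real.sqrt 2), ∀ y ∈ cubeVertices m (Real.sqrt 2),
          dist (f x) (f y) = dist x y) ∧
        (∀ x ∈ cubeVertices m (Real.sqrt 2), ∀ y ∈ cubeVertices m (Real.sqrt 2),
          χ (f x) = χ (f y)) :=
  simplex_product_mono_cube_general r m hm n h0 hstep
end

section
/- For every positive integer d and every finite set M ⊂ ℝ^d all of whose points have rational coordinates (where ℝ^d carries the ℓ₁ norm), there exists a positive integer n such that for every coloring of ℝⁿ equipped with the ℓ₁ (Manhattan) norm with an arbitrary set of colors, there exists an ℓ₁-isometric copy of M in ℝⁿ that is either monochromatic or rainbow. -/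
/-!
Clearing denominators and writing coordinates in unary, a finite rational set `M` becomes, up to
a common scale, a set of vertices of a Hamming cube `{0,1}^N` with the Hamming metric. One-hot
vectors embed the grid `[K]^L` into `ℓ₁^{LK}`, turning Hamming distance into a multiple of
`ℓ₁` distance. By the product Ramsey theorem applied to the equality pattern of a colouring on
boxes `∏ {s_ℓ < t_ℓ}`, every colouring of `[K]^L` (K large) admits a box `∏ {a_ℓ, b_ℓ}` on which
two points have equal colours iff they agree on a fixed set `J` of coordinates. Taking
`L = 2N + 1`, either `J` or its complement has `N` coordinates; placing the cube there gives a
rainbow, respectively monochromatic, copy of `M`.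
-/

open Finset Function

universe u

section Ramsey

variable {α C : Type*} [LinearOrder α] [Fintype C] [Nonempty C]

theorem exists_endHomogeneous_subset (χ : α → α → C) (t : ℕ) (A : Finset α)
    (hA : (Fintype.card C + 1) ^ t ≤ #A) :
    ∃ S ⊆ A, #S = t ∧ ∀ i ∈ S, ∀ j ∈ S, ∀ k ∈ S, i < j → i < k → χ i j = χ i k := by
  classical
  induction t generalizing A with
  | zero => exact ⟨∅, empty_subset _, rfl, by simp⟩
  | succ t ih =>
    have hne : A.Nonempty := card_pos.mp (lt_of_lt_of_le (by positivity) hA)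
    set a := A.min' hne
    have hB : Fintype.card C * (Fintype.card C + 1) ^ t ≤ #(A.erase a) := by
      rw [card_erase_of_mem (A.min'_mem hne)]
      have := Nat.one_le_pow t (Fintype.card C + 1) (by omega)
      rw [pow_succ, mul_add_one, mul_comm] at hA
      omega
    obtain ⟨γ, -, hγ⟩ := exists_le_card_fiber_of_mul_le_card_of_maps_to
      (f := fun x => χ a x) (fun _ _ => mem_univ _) univ_nonempty (by simpa using hB)
    obtain ⟨S, hSsub, hScard, hS⟩ := ih _ hγ
    have hSA : ∀ x ∈ S, x ∈ A ∧ x ≠ a ∧ χ a x = γ := fun x hx => by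
      have := hSsub hx
      simp only [mem_filter, mem_erase] at this
      exact ⟨this.1.2, this.1.1, this.2⟩
    have ha : a ∉ S := fun h => (hSA a h).2.1 rfl
    have hmem : ∀ i ∈ insert a S, ∀ j ∈ insert a S, i < j → j ∈ S := by
      intro i hi j hj hij
      rcases mem_insert.mp hj with rfl | hj
      · rcases mem_insert.mp hi with rfl | hi
        · exact absurd hij (lt_irrefl _)
        · exact absurd hij (not_lt.mpr (A.min'_le _ (hSA i hi).1))
      · exact hj
    refine ⟨insert a S, insert_subset (A.min'_mem hne) fun x hx => (hSA x hx).1,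
      by rw [card_insert_of_notMem ha, hScard], ?_⟩
    intro i hi j hj k hk hij hik
    have hjS := hmem i hi j hj hij
    have hkS := hmem i hi k hk hik
    rcases mem_insert.mp hi with rfl | hi
    · rw [(hSA j hjS).2.2, (hSA k hkS).2.2]
    · exact hS i hi j hjS k hkS hij hik

theorem exists_pairMonochromatic_subset (χ : α → α → C) (s : ℕ) (A : Finset α)
    (hA : (Fintype.card C + 1) ^ (Fintype.card C * s + 1) ≤ #A) :
    ∃ S ⊆ A, #S = s ∧ ∃ γ, ∀ i ∈ S, ∀ j ∈ S, i < j → χ i j = γ := by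
  classical
  obtain ⟨S₀, hS₀A, hS₀card, hS₀⟩ := exists_endHomogeneous_subset χ _ A hA
  have hne : S₀.Nonempty := card_pos.mp (by omega)
  set m := S₀.max' hne
  obtain ⟨γ, -, hγ⟩ := exists_le_card_fiber_of_mul_le_card_of_maps_to
    (f := fun i => χ i m) (s := S₀.erase m) (n := s) (fun _ _ => mem_univ _) univ_nonempty
    (by rw [card_erase_of_mem (S₀.max'_mem hne), hS₀card, card_univ]; simp)
  obtain ⟨S, hSsub, hScard⟩ := exists_subset_card_eq hγ
  have hSS₀ : ∀ i ∈ S, i ∈ S₀ ∧ i < m ∧ χ i m = γ := fun i hi => by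
    have := hSsub hi
    simp only [mem_filter, mem_erase] at this
    exact ⟨this.1.2, lt_of_le_of_ne (S₀.le_max' _ this.1.2) this.1.1, this.2⟩
  refine ⟨S, fun i hi => hS₀A (hSS₀ i hi).1, hScard, γ, fun i hi j hj hij => ?_⟩
  rw [hS₀ i (hSS₀ i hi).1 j (hSS₀ j hj).1 m (S₀.max'_mem hne) hij (hSS₀ i hi).2.1]
  exact (hSS₀ i hi).2.2

theorem exists_monochromatic_boxes (C : Type*) [Fintype C] [Nonempty C] (s L : ℕ) :
    ∃ K : ℕ, ∀ c : (Fin L → Fin K × Fin K) → C, ∃ h : Fin L → Fin s ↪o Fin K,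
      ∀ p q : Fin L → Fin s × Fin s, (∀ ℓ, (p ℓ).1 < (p ℓ).2) → (∀ ℓ, (q ℓ).1 < (q ℓ).2) →
        c (fun ℓ => Prod.map (h ℓ) (h ℓ) (p ℓ)) = c (fun ℓ => Prod.map (h ℓ) (h ℓ) (q ℓ)) := by
  classical
  induction L with
  | zero => exact ⟨0, fun c => ⟨finZeroElim, fun p q _ _ => congrArg c (Subsingleton.elim _ _)⟩⟩
  | succ L ih =>
    obtain ⟨K', hK'⟩ := ih
    set C' := (Fin L → Fin K' × Fin K') → C
    set K₀ := (Fintype.card C' + 1) ^ (Fintype.card C' * s + 1)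
    refine ⟨K₀ + K', fun c => ?_⟩
    let incl := Fin.castLEOrderEmb (Nat.le_add_left K' K₀)
    obtain ⟨S, -, hScard, γ, hγ⟩ := exists_pairMonochromatic_subset
      (fun a b (B : Fin L → Fin K' × Fin K') =>
        c (Fin.cons (a, b) fun ℓ => Prod.map incl incl (B ℓ)))
      s univ (by simp [K₀, C'])
    obtain ⟨h', hh'⟩ := hK' γ
    let h : Fin (L + 1) → Fin s ↪o Fin (K₀ + K') :=
      Fin.cons (S.orderEmbOfFin hScard) fun ℓ => (h' ℓ).trans incl
    have hsplit : ∀ r : Fin (L + 1) → Fin s × Fin s, (∀ ℓ, (r ℓ).1 < (r ℓ).2) →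
        c (fun ℓ => Prod.map (h ℓ) (h ℓ) (r ℓ)) = γ fun ℓ => Prod.map (h' ℓ) (h' ℓ) (r ℓ.succ) := by
      intro r hr
      rw [← hγ _ (S.orderEmbOfFin_mem hScard _) _ (S.orderEmbOfFin_mem hScard _)
        ((S.orderEmbOfFin hScard).strictMono (hr 0))]
      congr 1
      funext ℓ
      refine Fin.cases ?_ (fun ℓ => ?_) ℓ <;> rfl
    refine ⟨h, fun p q hp hq => ?_⟩
    rw [hsplit p hp, hsplit q hq]
    exact hh' _ _ (fun ℓ => hp ℓ.succ) (fun ℓ => hq ℓ.succ)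

end Ramsey

section CanonicalBox

variable {ι α : Type*}

def selectPair {β : Type*} (p : ι → β × β) (u : ι → Bool) : ι → β :=
  fun ℓ => if u ℓ then (p ℓ).2 else (p ℓ).1

theorem selectPair_map {β γ : Type*} (f : ι → β → γ) (p : ι → β × β) (u : ι → Bool) :
    selectPair (fun ℓ => Prod.map (f ℓ) (f ℓ) (p ℓ)) u = fun ℓ => f ℓ (selectPair p u ℓ) := by
  funext ℓ; unfold selectPair; split <;> rfl

-- Only the values `0, 1` form the canonical box; the spare top value `2` lets a coordinate where
-- two box points agree be read off an increasing pair.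
def HasUniformEqPattern (c : (ι → Fin 3) → α) : Prop :=
  ∀ p q : ι → Fin 3 × Fin 3, (∀ ℓ, (p ℓ).1 < (p ℓ).2) → (∀ ℓ, (q ℓ).1 < (q ℓ).2) →
    ∀ u v, (c (selectPair p u) = c (selectPair p v) ↔ c (selectPair q u) = c (selectPair q v))

def orderedPair (a b : Fin 3) : Fin 3 × Fin 3 :=
  if b < a then (b, a) else (a, if a < b then b else 2)

theorem orderedPair_spec : ∀ a b : Fin 3, a < 2 →
    (orderedPair a b).1 < (orderedPair a b).2 ∧
      (if decide (b < a) then (orderedPair a b).2 else (orderedPair a b).1) = a ∧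
      (if decide (a < b) then (orderedPair a b).2 else (orderedPair a b).1) = b := by
  decide

variable {c : (ι → Fin 3) → α}

theorem HasUniformEqPattern.eq_iff_eq (hc : HasUniformEqPattern c) {x y x' y' : ι → Fin 3}
    (hx : ∀ ℓ, x ℓ < 2) (hx' : ∀ ℓ, x' ℓ < 2) (hlt : ∀ ℓ, x ℓ < y ℓ ↔ x' ℓ < y' ℓ)
    (hgt : ∀ ℓ, y ℓ < x ℓ ↔ y' ℓ < x' ℓ) : c x = c y ↔ c x' = c y' := by
  have hsel : ∀ x y : ι → Fin 3, (∀ ℓ, x ℓ < 2) →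
      selectPair (fun ℓ => orderedPair (x ℓ) (y ℓ)) (fun ℓ => y ℓ < x ℓ) = x ∧
        selectPair (fun ℓ => orderedPair (x ℓ) (y ℓ)) (fun ℓ => x ℓ < y ℓ) = y :=
    fun x y hx => ⟨funext fun ℓ => (orderedPair_spec _ _ (hx ℓ)).2.1,
      funext fun ℓ => (orderedPair_spec _ _ (hx ℓ)).2.2⟩
  have h := hc _ _ (fun ℓ => (orderedPair_spec _ (y ℓ) (hx ℓ)).1)
    (fun ℓ => (orderedPair_spec _ (y' ℓ) (hx' ℓ)).1) (fun ℓ => y ℓ < x ℓ) (fun ℓ => x ℓ < y ℓ)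
  rw [(hsel x y hx).1, (hsel x y hx).2, funext fun ℓ => decide_eq_decide.mpr (hgt ℓ),
    funext fun ℓ => decide_eq_decide.mpr (hlt ℓ), (hsel x' y' hx').1, (hsel x' y' hx').2] at h
  exact h

def boxPoint (u : ι → Bool) : ι → Fin 3 := fun ℓ => if u ℓ then 1 else 0

theorem boxPoint_lt_two (u : ι → Bool) (ℓ : ι) : boxPoint u ℓ < 2 := by
  unfold boxPoint; split <;> decide

theorem boxPoint_lt_boxPoint {u v : ι → Bool} {ℓ : ι} :
    boxPoint u ℓ < boxPoint v ℓ ↔ u ℓ < v ℓ := by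
  unfold boxPoint; cases u ℓ <;> cases v ℓ <;> decide

variable [DecidableEq ι]

theorem HasUniformEqPattern.eq_update (hc : HasUniformEqPattern c) {j : ι}
    (hj : c (boxPoint fun _ => false) = c (boxPoint (update (fun _ => false) j true)))
    (w : ι → Bool) (b : Bool) : c (boxPoint (update w j b)) = c (boxPoint w) := by
  have hflip : ∀ w : ι → Bool, c (boxPoint (update w j false)) = c (boxPoint (update w j true)) :=
    fun w => (hc.eq_iff_eq (boxPoint_lt_two _) (boxPoint_lt_two _)
      (fun ℓ => by by_cases hℓ : ℓ = j <;> simp [boxPoint_lt_boxPoint, hℓ])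
      (fun ℓ => by by_cases hℓ : ℓ = j <;> simp [boxPoint_lt_boxPoint, hℓ])).mpr hj
  have hfalse : ∀ b, c (boxPoint (update w j b)) = c (boxPoint (update w j false)) := by
    intro b; cases b
    · rfl
    · exact (hflip w).symm
  rw [hfalse, ← hfalse (w j), update_eq_self]

theorem HasUniformEqPattern.eq_update_of_eq (hc : HasUniformEqPattern c) {u v : ι → Bool}
    (huv : c (boxPoint u) = c (boxPoint v)) {j : ι} (hu : u j = false) (hv : v j = true) :
    c (boxPoint fun _ => false) = c (boxPoint (update (fun _ => false) j true)) := by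
  -- Raising coordinate `j` of `boxPoint v` to `2` keeps the order type of its pair with
  -- `boxPoint u`, and `(boxPoint v, z)` has the order type of the pair in the conclusion.
  set z := update (boxPoint v) j 2
  have hvz : c (boxPoint v) = c z := by
    refine huv.symm.trans ((hc.eq_iff_eq (boxPoint_lt_two u) (boxPoint_lt_two u) (fun ℓ => ?_)
      (fun ℓ => ?_)).mpr huv)
    all_goals by_cases hℓ : ℓ = j
    all_goals simp [z, boxPoint, hℓ, hu, hv]
  refine (hc.eq_iff_eq (boxPoint_lt_two v) (boxPoint_lt_two _) (fun ℓ => ?_) (fun ℓ => ?_)).mp hvz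
  all_goals by_cases hℓ : ℓ = j
  all_goals simp [z, boxPoint, hℓ, hv]

theorem HasUniformEqPattern.exists_finset_eq_iff [Fintype ι] (hc : HasUniformEqPattern c) :
    ∃ J : Finset ι, ∀ u v : ι → Bool, c (boxPoint u) = c (boxPoint v) ↔ ∀ j ∈ J, u j = v j := by
  classical
  set J : Finset ι :=
    {j | c (boxPoint fun _ => false) ≠ c (boxPoint (update (fun _ => false) j true))}
  refine ⟨J, fun u v => ⟨fun huv j hj => ?_, fun hagree => ?_⟩⟩
  · simp only [J, mem_filter, mem_univ, true_and] at hj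
    cases hu : u j <;> cases hv : v j
    · rfl
    · exact absurd (hc.eq_update_of_eq huv hu hv) hj
    · exact absurd (hc.eq_update_of_eq huv.symm hv hu) hj
    · rfl
  have hpiecewise : ∀ S : Finset ι, c (boxPoint (S.piecewise v u)) = c (boxPoint u) := by
    intro S
    induction S using Finset.induction_on with
    | empty => simp
    | insert j S hjS ih =>
      rw [piecewise_insert]
      by_cases hj : j ∈ J
      · rwa [update_eq_self_iff.mpr (by rw [piecewise_eq_of_notMem _ _ _ hjS, hagree j hj])]
      · rw [hc.eq_update (by simpa [J] using hj), ih]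
  simpa using (hpiecewise univ).symm

end CanonicalBox

theorem exists_canonical_box (L : ℕ) : ∃ K : ℕ, ∀ (α : Type u) (χ : (Fin L → Fin K) → α),
    ∃ e : Fin L → Bool → Fin K, (∀ ℓ, Injective (e ℓ)) ∧ ∃ J : Finset (Fin L),
      ∀ u v : Fin L → Bool, χ (fun ℓ => e ℓ (u ℓ)) = χ (fun ℓ => e ℓ (v ℓ)) ↔
        ∀ j ∈ J, u j = v j := by
  classical
  obtain ⟨K, hK⟩ := exists_monochromatic_boxes ((Fin L → Bool) → (Fin L → Bool) → Prop) 3 L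
  refine ⟨K, fun α χ => ?_⟩
  obtain ⟨h, hh⟩ := hK fun B u v => χ (selectPair B u) = χ (selectPair B v)
  have hc : HasUniformEqPattern fun x : Fin L → Fin 3 => χ fun ℓ => h ℓ (x ℓ) := by
    intro p q hp hq u v
    have := congrFun (congrFun (hh p q hp hq) u) v
    simp only [selectPair_map] at this
    exact Iff.of_eq this
  obtain ⟨J, hJ⟩ := hc.exists_finset_eq_iff
  exact ⟨fun ℓ b => h ℓ (if b then 1 else 0), fun ℓ => (h ℓ).injective.comp (by decide), J, hJ⟩

theorem hammingDist_prod {ι κ β : Type*} [Fintype ι] [Fintype κ] [DecidableEq β]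
    (f g : ι × κ → β) :
    hammingDist f g = ∑ i, hammingDist (fun t => f (i, t)) (fun t => g (i, t)) := by
  simp only [hammingDist, card_filter, Fintype.sum_prod_type]

theorem hammingDist_unary {a b m : ℕ} (ha : a ≤ m) (hb : b ≤ m) :
    (hammingDist (fun t : Fin m => decide (t.val < a)) (fun t => decide (t.val < b)) : ℝ) =
      |(a : ℝ) - b| := by
  wlog hab : a ≤ b generalizing a b
  · rw [hammingDist_comm, abs_sub_comm]
    exact this hb ha (le_of_not_ge hab)
  have hfilter : hammingDist (fun t : Fin m => decide (t.val < a)) (fun t => decide (t.val < b)) =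
      #((univ.filter fun t : Fin m => t.val < b) \ univ.filter fun t : Fin m => t.val < a) := by
    unfold hammingDist; congr 1; ext t; simp; omega
  have hsub : (univ.filter fun t : Fin m => t.val < a) ⊆ univ.filter fun t => t.val < b :=
    fun t ht => by simp only [mem_filter, mem_univ, true_and] at ht ⊢; omega
  rw [hfilter, card_sdiff_of_subset hsub, Fin.card_filter_val_lt, Fin.card_filter_val_lt,
    min_eq_right ha, min_eq_right hb, Nat.cast_sub hab, abs_sub_comm,
    abs_of_nonneg (by simpa using hab)]

theorem Set.Finite.exists_nat_mul_eq_int {S : Set ℝ} (hS : S.Finite)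
    (hrat : ∀ s ∈ S, ∃ q : ℚ, s = q) : ∃ D : ℕ, 0 < D ∧ ∀ s ∈ S, ∃ z : ℤ, s * D = z := by
  induction S, hS using Set.Finite.induction_on with
  | empty => exact ⟨1, one_pos, by simp⟩
  | @insert a S _ _ ih =>
    obtain ⟨D, hD, hDS⟩ := ih fun s hs => hrat s (Set.mem_insert_of_mem _ hs)
    obtain ⟨q, rfl⟩ := hrat a (Set.mem_insert _ _)
    refine ⟨D * q.den, by positivity, ?_⟩
    rintro s (rfl | hs)
    · have hq : (q : ℝ) * q.den = q.num := by exact_mod_cast Rat.mul_den_eq_num q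
      exact ⟨q.num * D, by push_cast; linear_combination (D : ℝ) * hq⟩
    · obtain ⟨z, hz⟩ := hDS s hs
      exact ⟨z * q.den, by push_cast; rw [← hz]; ring⟩

theorem Set.Finite.exists_forall_eq_mul_nat_add {S : Set ℝ} (hS : S.Finite)
    (hrat : ∀ s ∈ S, ∃ q : ℚ, s = q) :
    ∃ (a b : ℝ) (m : ℕ), 0 < a ∧ ∀ s ∈ S, ∃ k : ℕ, k ≤ m ∧ s = a * k + b := by
  obtain ⟨D, hD, hDS⟩ := hS.exists_nat_mul_eq_int hrat
  obtain ⟨B, hB⟩ := (hS.image fun s : ℝ => |s * D|).bddAbove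
  set R := ⌈B⌉₊
  refine ⟨(D : ℝ)⁻¹, -R / D, 2 * R, by positivity, fun s hs => ?_⟩
  obtain ⟨z, hz⟩ := hDS s hs
  have hzR : |(z : ℝ)| ≤ (R : ℝ) := hz ▸ (hB ⟨s, hs, rfl⟩).trans (Nat.le_ceil B)
  have hzR' : |z| ≤ (R : ℤ) := by exact_mod_cast hzR
  rw [abs_le] at hzR'
  refine ⟨(z + R).toNat, by omega, ?_⟩
  have hk : (((z + R).toNat : ℕ) : ℝ) = z + R := by exact_mod_cast Int.toNat_of_nonneg (by omega)
  rw [hk, ← hz]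
  field_simp
  ring

theorem exists_dist_eq_mul_hammingDist_of_rat {ι : Type*} [Fintype ι]
    {M : Set (PiLp 1 fun _ : ι => ℝ)} (hM : M.Finite) (hrat : ∀ x ∈ M, ∀ i, ∃ q : ℚ, x i = q) :
    ∃ (m : ℕ) (c : ℝ), 0 ≤ c ∧ ∃ ε : (PiLp 1 fun _ : ι => ℝ) → ι × Fin m → Bool,
      ∀ x ∈ M, ∀ y ∈ M, dist x y = c * hammingDist (ε x) (ε y) := by
  obtain ⟨a, b, m, ha, hk⟩ :=
    ((hM.prod Set.finite_univ).image fun p => p.1 p.2).exists_forall_eq_mul_nat_add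
      (by rintro _ ⟨⟨x, i⟩, ⟨hx, -⟩, rfl⟩; exact hrat x hx i)
  choose! k hkm hk using hk
  have hcoord : ∀ x ∈ M, ∀ i, k (x i) ≤ m ∧ x i = a * k (x i) + b :=
    fun x hx i => ⟨hkm _ ⟨(x, i), ⟨hx, trivial⟩, rfl⟩, hk _ ⟨(x, i), ⟨hx, trivial⟩, rfl⟩⟩
  refine ⟨m, a, ha.le, fun x w => decide (w.2.val < k (x w.1)), fun x hx y hy => ?_⟩
  rw [PiLp.dist_eq_of_L1, hammingDist_prod, Nat.cast_sum, mul_sum]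
  refine sum_congr rfl fun i _ => ?_
  have hdiff : x i - y i = a * ((k (x i) : ℝ) - k (y i)) := by
    linear_combination (hcoord x hx i).2 - (hcoord y hy i).2
  rw [hammingDist_unary (hcoord x hx i).1 (hcoord y hy i).1, Real.dist_eq, hdiff, abs_mul,
    abs_of_pos ha]

section OneHot

variable {ι κ : Type*} [Fintype ι] [Fintype κ] [DecidableEq κ]

def oneHot (r : ℝ) (g : ι → κ) : PiLp 1 fun _ : ι × κ => ℝ :=
  WithLp.toLp 1 fun w => if g w.1 = w.2 then r else 0

theorem sum_abs_ite_sub_ite {r : ℝ} (hr : 0 ≤ r) (a b : κ) :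
    ∑ k, |(if a = k then r else 0) - (if b = k then r else 0)| = if a = b then 0 else 2 * r := by
  split_ifs with hab
  · simp [hab]
  · have hpt : ∀ k, |(if a = k then r else 0) - (if b = k then r else 0)| =
        (if a = k then r else 0) + (if b = k then r else 0) := by
      intro k
      by_cases hak : a = k <;> by_cases hbk : b = k
      · exact absurd (hak.trans hbk.symm) hab
      all_goals simp [hak, hbk, abs_of_nonneg hr]
    simp only [hpt, sum_add_distrib, sum_ite_eq, mem_univ, if_true]
    ring

theorem dist_oneHot {r : ℝ} (hr : 0 ≤ r) (g g' : ι → κ) :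
    dist (oneHot r g) (oneHot r g') = 2 * r * hammingDist g g' := by
  simp only [PiLp.dist_eq_of_L1, Fintype.sum_prod_type, oneHot, Real.dist_eq,
    sum_abs_ite_sub_ite hr, hammingDist, card_filter, Nat.cast_sum, mul_sum]
  refine sum_congr rfl fun i _ => ?_
  split_ifs <;> simp_all

end OneHot

theorem hammingDist_extend {κ β : Type*} [Fintype κ] [Fintype β] (f : κ ↪ β)
    (u v : κ → Bool) (e : β → Bool) :
    hammingDist (extend f u e) (extend f v e) = hammingDist u v := by
  classical
  unfold hammingDist
  rw [← card_map f]
  congr 1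
  ext b
  by_cases hb : ∃ a, f a = b
  · obtain ⟨a, rfl⟩ := hb
    simp [f.injective.extend_apply]
  · simp only [mem_filter, mem_univ, true_and, extend_apply' _ _ _ hb, ne_eq, not_true_eq_false,
      false_iff, mem_map]
    rintro ⟨a, -, rfl⟩
    exact hb ⟨a, rfl⟩

theorem Finset.exists_embedding_forall_mem {κ β : Type*} [Fintype κ] (S : Finset β)
    (h : Fintype.card κ ≤ #S) : ∃ f : κ ↪ β, ∀ a, f a ∈ S := by
  obtain ⟨g⟩ := Function.Embedding.nonempty_of_card_le (α := κ) (β := S) (by simpa using h)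
  exact ⟨g.trans (Embedding.subtype _), fun a => (g a).2⟩

theorem Finset.exists_embedding_forall_mem_or_forall_notMem {κ β : Type*} [Fintype κ]
    [Fintype β] [DecidableEq β] (S : Finset β) (h : 2 * Fintype.card κ ≤ Fintype.card β) :
    ∃ f : κ ↪ β, (∀ a, f a ∈ S) ∨ ∀ a, f a ∉ S := by
  have hS := card_add_card_compl S
  rcases le_or_gt (Fintype.card κ) #S with hκ | hκ
  · obtain ⟨f, hf⟩ := S.exists_embedding_forall_mem hκ
    exact ⟨f, Or.inl hf⟩
  · obtain ⟨f, hf⟩ := Sᶜ.exists_embedding_forall_mem (κ := κ) (by omega)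
    exact ⟨f, Or.inr fun a => mem_compl.mp (hf a)⟩

theorem exists_mono_or_rainbow_copy_of_dist_eq_mul_hammingDist {X κ : Type*} [MetricSpace X]
    [Fintype κ] {M : Set X} {c : ℝ} (hc : 0 ≤ c) {ε : X → κ → Bool}
    (hε : ∀ x ∈ M, ∀ y ∈ M, dist x y = c * hammingDist (ε x) (ε y)) :
    ∃ n : ℕ, 0 < n ∧ ∀ (α : Type u) (χ : (PiLp 1 fun _ : Fin n => ℝ) → α),
      ∃ f : X → PiLp 1 fun _ : Fin n => ℝ, Set.InjOn f M ∧
        (∀ x ∈ M, ∀ y ∈ M, dist (f x) (f y) = dist x y) ∧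
        ((∀ x ∈ M, ∀ y ∈ M, χ (f x) = χ (f y)) ∨
          (∀ x ∈ M, ∀ y ∈ M, χ (f x) = χ (f y) → x = y)) := by
  classical
  set L := 2 * Fintype.card κ + 1
  obtain ⟨K, hK⟩ := exists_canonical_box.{u} L
  have hK₀ : 0 < K := by
    obtain ⟨e, -⟩ := hK PUnit fun _ => PUnit.unit
    exact (e ⟨0, by omega⟩ false).pos
  let T := LinearIsometryEquiv.piLpCongrLeft 1 ℝ ℝ (finProdFinEquiv (m := L) (n := K))
  refine ⟨L * K, Nat.mul_pos (by omega) hK₀, fun α χ => ?_⟩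
  obtain ⟨e, he, J, hJ⟩ := hK α fun g => χ (T (oneHot (c / 2) g))
  obtain ⟨φ, hφ⟩ := J.exists_embedding_forall_mem_or_forall_notMem (κ := κ) (by simp [L])
  set w : X → Fin L → Bool := fun x => extend φ (ε x) fun _ => false
  set f : X → PiLp 1 fun _ : Fin (L * K) => ℝ := fun x => T (oneHot (c / 2) fun ℓ => e ℓ (w x ℓ))
  have hf : ∀ x ∈ M, ∀ y ∈ M, dist (f x) (f y) = dist x y := fun x hx y hy => by
    rw [T.dist_map, dist_oneHot (by positivity), hammingDist_comp _ he, hammingDist_extend,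
      hε x hx y hy]
    ring
  have hfχ : ∀ x y, χ (f x) = χ (f y) ↔ ∀ j ∈ J, w x j = w y j := fun x y => hJ _ _
  refine ⟨f, fun x hx y hy hxy => dist_eq_zero.mp (by rw [← hf x hx y hy, hxy, dist_self]), hf,
    hφ.symm.imp (fun hout x _ y _ => (hfχ x y).mpr fun j hj => ?_)
      (fun hin x hx y hy hxy => dist_eq_zero.mp ?_)⟩
  · have hjφ : ¬∃ a, φ a = j := fun ⟨a, ha⟩ => hout a (ha ▸ hj)
    simp only [w, extend_apply' _ _ _ hjφ]
  · have hεxy : ε x = ε y := funext fun a => by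
      simpa [w, φ.injective.extend_apply] using (hfχ x y).mp hxy (φ a) (hin a)
    rw [hε x hx y hy, hεxy, hammingDist_self, Nat.cast_zero, mul_zero]

theorem manhattan_rational_mono_or_rainbow_general (d : ℕ)
    (M : Set (PiLp 1 fun _ : Fin d => ℝ)) (hM : M.Finite)
    (hrat : ∀ x ∈ M, ∀ i : Fin d, ∃ q : ℚ, x i = (q : ℝ)) :
    ∃ n : ℕ, 0 < n ∧
      ∀ (α : Type*) (χ : (PiLp 1 fun _ : Fin n => ℝ) → α),
        ∃ f : (PiLp 1 fun _ : Fin d => ℝ) → (PiLp 1 fun _ : Fin n => ℝ),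
          Set.InjOn f M ∧
          (∀ x ∈ M, ∀ y ∈ M, dist (f x) (f y) = dist x y) ∧
          ((∀ x ∈ M, ∀ y ∈ M, χ (f x) = χ (f y)) ∨
            (∀ x ∈ M, ∀ y ∈ M, χ (f x) = χ (f y) → x = y)) := by
  obtain ⟨m, c, hc, ε, hε⟩ := exists_dist_eq_mul_hammingDist_of_rat hM hrat
  exact exists_mono_or_rainbow_copy_of_dist_eq_mul_hammingDist hc hε

/-- For every finite `M ⊂ ℝ^d` with rational coordinates (taxicab norm), there exists
`n` such that every coloring of `ℝⁿ` with the `ℓ₁` norm, with an arbitrary set of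
colors, contains an `ℓ₁`-isometric copy of `M` that is either monochromatic or
rainbow. -/
theorem manhattan_rational_mono_or_rainbow (d : ℕ) (hd : 0 < d)
    (M : Set (PiLp 1 fun _ : Fin d => ℝ)) (hM : M.Finite)
    (hrat : ∀ x ∈ M, ∀ i : Fin d, ∃ q : ℚ, x i = (q : ℝ)) :
    ∃ n : ℕ, 0 < n ∧
      ∀ (α : Type*) (χ : (PiLp 1 fun _ : Fin n => ℝ) → α),
        ∃ f : (PiLp 1 fun _ : Fin d => ℝ) → (PiLp 1 fun _ : Fin n => ℝ),
          Set.InjOn f M ∧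
          (∀ x ∈ M, ∀ y ∈ M, dist (f x) (f y) = dist x y) ∧
          ((∀ x ∈ M, ∀ y ∈ M, χ (f x) = χ (f y)) ∨
            (∀ x ∈ M, ∀ y ∈ M, χ (f x) = χ (f y) → x = y)) :=
  manhattan_rational_mono_or_rainbow_general d M hM hrat
end
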